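/- arXiv:cs/0301030 — 12 statements merged into one kernel-verified Lean document; each statement's English description precedes it below -/
import Mathlib

section
/- For all integers t ≥ 4, there exist two sequences over some alphabet of total length t whose number of distinct longest common subsequences is at least 3^((⌊t/2⌋ - 2z)/3) · 2^z, where z = (-⌊t/2⌋) mod 3. -/
/-- `C` is a longest common subsequence of `A` and `B`. -/
def IsLCS {α : Type*} (A B C : List α) : Prop :=
  C.Sublist A ∧ C.Sublist B ∧ ∀ D : List α, D.Sublist A → D.Sublist B → D.length ≤ C.length

namespace LCSAux

lemma len_le_one {D : List ℕ} (h1 : D.Pairwise (· < ·)) (h2 : D.Pairwise (· > ·)) :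
    D.length ≤ 1 := by
  match D with
  | [] => simp
  | [x] => simp
  | x :: y :: r =>
    rw [List.pairwise_cons] at h1 h2
    have a1 := h1.1 y (by simp)
    have a2 := h2.1 y (by simp)
    simp only [gt_iff_lt] at a2
    omega

lemma split_cs {n : ℕ} {A₁ B₁ A₂ B₂ D : List ℕ}
    (hA₁ : ∀ x ∈ A₁, x < n) (hB₁ : ∀ x ∈ B₁, x < n)
    (hA₂ : ∀ x ∈ A₂, n ≤ x) (hB₂ : ∀ x ∈ B₂, n ≤ x)
    (hDA : D.Sublist (A₁ ++ A₂)) (hDB : D.Sublist (B₁ ++ B₂)) :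
    ∃ D₁ D₂, D = D₁ ++ D₂ ∧ D₁.Sublist A₁ ∧ D₁.Sublist B₁ ∧ D₂.Sublist A₂ ∧ D₂.Sublist B₂ := by
  obtain ⟨l₁, l₂, hD, hl₁, hl₂⟩ := List.sublist_append_iff.mp hDA
  obtain ⟨m₁, m₂, hD', hm₁, hm₂⟩ := List.sublist_append_iff.mp hDB
  have heq : l₁ ++ l₂ = m₁ ++ m₂ := by rw [← hD, ← hD']
  have c1 : (l₁ ++ l₂).countP (fun x => decide (x < n)) = l₁.length := by
    rw [List.countP_append]
    have e1 : l₁.countP (fun x => decide (x < n)) = l₁.length :=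
      List.countP_eq_length.mpr (fun a ha => by simpa using hA₁ a (hl₁.subset ha))
    have e2 : l₂.countP (fun x => decide (x < n)) = 0 :=
      List.countP_eq_zero.mpr (fun a ha => by
        have := hA₂ a (hl₂.subset ha); simp; omega)
    omega
  have c2 : (m₁ ++ m₂).countP (fun x => decide (x < n)) = m₁.length := by
    rw [List.countP_append]
    have e1 : m₁.countP (fun x => decide (x < n)) = m₁.length :=
      List.countP_eq_length.mpr (fun a ha => by simpa using hB₁ a (hm₁.subset ha))
    have e2 : m₂.countP (fun x => decide (x < n)) = 0 :=
      List.countP_eq_zero.mpr (fun a ha => by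
        have := hB₂ a (hm₂.subset ha); simp; omega)
    omega
  rw [heq] at c1
  obtain ⟨rfl, rfl⟩ := List.append_inj heq (by omega)
  exact ⟨l₁, l₂, hD, hl₁, hm₁, hl₂, hm₂⟩

lemma combine {n : ℕ} {A₁ B₁ A₂ B₂ : List ℕ} {S₁ S₂ : Finset (List ℕ)} {m₁ m₂ : ℕ}
    (hA₁ : ∀ x ∈ A₁, x < n) (hB₁ : ∀ x ∈ B₁, x < n)
    (hA₂ : ∀ x ∈ A₂, n ≤ x) (hB₂ : ∀ x ∈ B₂, n ≤ x)
    (good₁ : ∀ C ∈ S₁, C.Sublist A₁ ∧ C.Sublist B₁ ∧ C.length = m₁)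
    (max₁ : ∀ D : List ℕ, D.Sublist A₁ → D.Sublist B₁ → D.length ≤ m₁)
    (good₂ : ∀ C ∈ S₂, C.Sublist A₂ ∧ C.Sublist B₂ ∧ C.length = m₂)
    (max₂ : ∀ D : List ℕ, D.Sublist A₂ → D.Sublist B₂ → D.length ≤ m₂) :
    ∃ S : Finset (List ℕ), S.card = S₁.card * S₂.card ∧
      (∀ C ∈ S, C.Sublist (A₁ ++ A₂) ∧ C.Sublist (B₁ ++ B₂) ∧ C.length = m₁ + m₂) ∧
      (∀ D : List ℕ, D.Sublist (A₁ ++ A₂) → D.Sublist (B₁ ++ B₂) → D.length ≤ m₁ + m₂) := by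
  refine ⟨(S₁ ×ˢ S₂).image (fun p => p.1 ++ p.2), ?_, ?_, ?_⟩
  · rw [Finset.card_image_of_injOn, Finset.card_product]
    intro p hp q hq h
    simp only [Finset.mem_coe, Finset.mem_product] at hp hq
    have e1 := (good₁ _ hp.1).2.2
    have e2 := (good₁ _ hq.1).2.2
    obtain ⟨h1, h2⟩ := List.append_inj h (by omega)
    exact Prod.ext h1 h2
  · intro C hC
    simp only [Finset.mem_image, Finset.mem_product] at hC
    obtain ⟨⟨C₁, C₂⟩, ⟨h1, h2⟩, rfl⟩ := hC
    obtain ⟨a1, b1, l1⟩ := good₁ _ h1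
    obtain ⟨a2, b2, l2⟩ := good₂ _ h2
    exact ⟨a1.append a2, b1.append b2, by simp [l1, l2]⟩
  · intro D hDA hDB
    obtain ⟨D₁, D₂, rfl, d1, d2, d3, d4⟩ := split_cs hA₁ hB₁ hA₂ hB₂ hDA hDB
    have t1 := max₁ D₁ d1 d2
    have t2 := max₂ D₂ d3 d4
    simp only [List.length_append]
    omega

lemma build (k : ℕ) : ∀ z off : ℕ, ∃ A B : List ℕ, ∃ S : Finset (List ℕ), ∃ m : ℕ,
    A.length = 3 * k + 2 * z ∧ B.length = 3 * k + 2 * z ∧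
    (∀ x ∈ A, off ≤ x) ∧ (∀ x ∈ B, off ≤ x) ∧
    S.card = 3 ^ k * 2 ^ z ∧
    (∀ C ∈ S, C.Sublist A ∧ C.Sublist B ∧ C.length = m) ∧
    (∀ D : List ℕ, D.Sublist A → D.Sublist B → D.length ≤ m) := by
  induction k with
  | zero =>
    intro z
    induction z with
    | zero =>
      intro off
      refine ⟨[], [], {[]}, 0, by simp, by simp, by simp, by simp, by simp, by simp, ?_⟩
      intro D hD _
      simp [List.sublist_nil.mp hD]
    | succ z ih =>
      intro off
      obtain ⟨A, B, S, m, hAl, hBl, hAo, hBo, hS, hgood, hmax⟩ := ih (off + 2)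
      have p1 : ([off, off + 1] : List ℕ).Pairwise (· < ·) := by
        simp [List.pairwise_cons]
      have p2 : ([off + 1, off] : List ℕ).Pairwise (· > ·) := by
        simp [List.pairwise_cons]
      obtain ⟨T, hT, hTgood, hTmax⟩ :=
        combine (n := off + 2) (A₁ := [off, off + 1]) (B₁ := [off + 1, off])
          (S₁ := {[off], [off + 1]}) (m₁ := 1)
          (by intro x hx; simp at hx; omega) (by intro x hx; simp at hx; omega)
          hAo hBo
          (by
            intro C hC
            simp only [Finset.mem_insert, Finset.mem_singleton] at hC
            rcases hC with rfl | rfl <;> simp)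
          (by
            intro D hD1 hD2
            exact len_le_one (List.Pairwise.sublist hD1 p1) (List.Pairwise.sublist hD2 p2))
          hgood hmax
      refine ⟨[off, off + 1] ++ A, [off + 1, off] ++ B, T, 1 + m, ?_, ?_, ?_, ?_, ?_, hTgood, hTmax⟩
      · simp [hAl]; ring
      · simp [hBl]; ring
      · intro x hx; simp at hx
        rcases hx with rfl | rfl | h
        · omega
        · omega
        · have := hAo x h; omega
      · intro x hx; simp at hx
        rcases hx with rfl | rfl | h
        · omega
        · omega
        · have := hBo x h; omega
      · rw [hT, hS]
        have : ({[off], [off + 1]} : Finset (List ℕ)).card = 2 := by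
          rw [Finset.card_insert_of_notMem (by simp), Finset.card_singleton]
        rw [this]; ring
  | succ k ih =>
    intro z off
    obtain ⟨A, B, S, m, hAl, hBl, hAo, hBo, hS, hgood, hmax⟩ := ih z (off + 3)
    have p1 : ([off, off + 1, off + 2] : List ℕ).Pairwise (· < ·) := by
      simp [List.pairwise_cons]
    have p2 : ([off + 2, off + 1, off] : List ℕ).Pairwise (· > ·) := by
      simp [List.pairwise_cons]
    obtain ⟨T, hT, hTgood, hTmax⟩ :=
      combine (n := off + 3) (A₁ := [off, off + 1, off + 2]) (B₁ := [off + 2, off + 1, off])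
        (S₁ := {[off], [off + 1], [off + 2]}) (m₁ := 1)
        (by intro x hx; simp at hx; omega) (by intro x hx; simp at hx; omega)
        (by intro x hx; have := hAo x hx; omega) (by intro x hx; have := hBo x hx; omega)
        (by
          intro C hC
          simp only [Finset.mem_insert, Finset.mem_singleton] at hC
          rcases hC with rfl | rfl | rfl <;> simp)
        (by
          intro D hD1 hD2
          exact len_le_one (List.Pairwise.sublist hD1 p1) (List.Pairwise.sublist hD2 p2))
        hgood hmax
    refine ⟨[off, off + 1, off + 2] ++ A, [off + 2, off + 1, off] ++ B, T, 1 + m, ?_, ?_, ?_, ?_, ?_, hTgood, hTmax⟩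
    · simp [hAl]; ring
    · simp [hBl]; ring
    · intro x hx; simp at hx
      rcases hx with rfl | rfl | rfl | h
      · omega
      · omega
      · omega
      · have := hAo x h; omega
    · intro x hx; simp at hx
      rcases hx with rfl | rfl | rfl | h
      · omega
      · omega
      · omega
      · have := hBo x h; omega
    · rw [hT, hS]
      have : ({[off], [off + 1], [off + 2]} : Finset (List ℕ)).card = 3 := by
        rw [Finset.card_insert_of_notMem (by simp), Finset.card_insert_of_notMem (by simp),
          Finset.card_singleton]
      rw [this]; ring

lemma sublist_append_singleton {D A : List ℕ} {x : ℕ} (h : D.Sublist (A ++ [x]))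
    (hx : x ∉ D) : D.Sublist A := by
  obtain ⟨l₁, l₂, rfl, h1, h2⟩ := List.sublist_append_iff.mp h
  rcases List.sublist_singleton.mp h2 with rfl | rfl
  · simpa using h1
  · simp at hx

end LCSAux

theorem stmt0 (t : ℕ) (ht : 4 ≤ t) :
    ∃ A B : List ℕ, A.length + B.length = t ∧
      3 ^ ((t / 2 - 2 * ((-(t / 2 : ℤ)) % 3).toNat) / 3) * 2 ^ ((-(t / 2 : ℤ)) % 3).toNat
        ≤ {C : List ℕ | IsLCS A B C}.ncard := by
  set z := ((-(t / 2 : ℤ)) % 3).toNat with hzdef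
  have hz : (z : ℤ) = (-(t / 2 : ℤ)) % 3 := by
    rw [hzdef]
    exact Int.toNat_of_nonneg (Int.emod_nonneg _ (by norm_num))
  set k := (t / 2 - 2 * z) / 3 with hkdef
  have hmz : t / 2 = 3 * k + 2 * z := by omega
  obtain ⟨A, B, S, m, hAl, hBl, hAo, hBo, hS, hgood, hmax⟩ := LCSAux.build k z 0
  -- finiteness helper
  have fin_lcs : ∀ A' : List ℕ, {C : List ℕ | IsLCS A' B C}.Finite := by
    intro A'
    apply Set.Finite.subset (A'.sublists.toFinset.finite_toSet)
    intro C hC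
    simp only [Finset.mem_coe, List.mem_toFinset, List.mem_sublists]
    exact hC.1
  rcases Nat.even_or_odd t with he | ho
  · refine ⟨A, B, ?_, ?_⟩
    · obtain ⟨j, rfl⟩ := he
      rw [hAl, hBl]
      clear hz hS
      omega
    · have hsub : ↑S ⊆ {C : List ℕ | IsLCS A B C} := by
        intro C hC
        obtain ⟨c1, c2, c3⟩ := hgood C hC
        exact ⟨c1, c2, fun D d1 d2 => by rw [c3]; exact hmax D d1 d2⟩
      calc 3 ^ k * 2 ^ z = S.card := hS.symm
        _ = (↑S : Set (List ℕ)).ncard := (Set.ncard_coe_finset S).symm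
        _ ≤ _ := Set.ncard_le_ncard hsub (fin_lcs A)
  · obtain ⟨x, hx⟩ := Infinite.exists_notMem_finset B.toFinset
    rw [List.mem_toFinset] at hx
    refine ⟨A ++ [x], B, ?_, ?_⟩
    · obtain ⟨j, rfl⟩ := ho
      rw [List.length_append, hAl, hBl]
      simp only [List.length_singleton]
      clear hz hS
      omega
    · have hsub : ↑S ⊆ {C : List ℕ | IsLCS (A ++ [x]) B C} := by
        intro C hC
        obtain ⟨c1, c2, c3⟩ := hgood C hC
        refine ⟨c1.trans (List.sublist_append_left A [x]), c2, fun D d1 d2 => ?_⟩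
        rw [c3]
        refine hmax D (LCSAux.sublist_append_singleton d1 fun hmem => hx (d2.subset hmem)) d2
      calc 3 ^ k * 2 ^ z = S.card := hS.symm
        _ = (↑S : Set (List ℕ)).ncard := (Set.ncard_coe_finset S).symm
        _ ≤ _ := Set.ncard_le_ncard hsub (fin_lcs (A ++ [x]))
end

section
/- For t divisible by 6, the maximum number D(t) of distinct longest common subsequences of two sequences of total length t satisfies D(t) ≥ 3^(t/6) > 1.2^t. -/
namespace LCSaux

open List

def Aseq : ℕ → ℕ → List ℕ
  | _, 0 => []
  | n, (k+1) => 3*n :: (3*n+1) :: (3*n+2) :: Aseq (n+1) k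

def Bseq : ℕ → ℕ → List ℕ
  | _, 0 => []
  | n, (k+1) => (3*n+2) :: (3*n+1) :: 3*n :: Bseq (n+1) k

def Cseq : ℕ → List (Fin 3) → List ℕ
  | _, [] => []
  | n, (a :: c) => (3*n + (a : ℕ)) :: Cseq (n+1) c

lemma length_A : ∀ (k n : ℕ), (Aseq n k).length = 3*k
  | 0, _ => rfl
  | (k+1), n => by simp [Aseq, length_A k (n+1)]; ring

lemma length_B : ∀ (k n : ℕ), (Bseq n k).length = 3*k
  | 0, _ => rfl
  | (k+1), n => by simp [Bseq, length_B k (n+1)]; ring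

lemma length_C : ∀ (c : List (Fin 3)) (n : ℕ), (Cseq n c).length = c.length
  | [], _ => rfl
  | (a :: c), n => by simp [Cseq, length_C c (n+1)]

lemma mem_A_ge : ∀ (k n x : ℕ), x ∈ Aseq n k → 3*n ≤ x
  | 0, n, x => by simp [Aseq]
  | (k+1), n, x => by
    intro hx
    simp only [Aseq, List.mem_cons] at hx
    rcases hx with rfl | rfl | rfl | hx
    · omega
    · omega
    · omega
    · have := mem_A_ge k (n+1) x hx; omega

lemma pairwise_A : ∀ (k n : ℕ), (Aseq n k).Pairwise (· < ·)
  | 0, n => by simp [Aseq]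
  | (k+1), n => by
    simp only [Aseq, List.pairwise_cons]
    refine ⟨?_, ?_, ?_, pairwise_A k (n+1)⟩ <;> intro y hy <;>
      (try simp only [List.mem_cons] at hy)
    · rcases hy with rfl | rfl | hy
      · omega
      · omega
      · have := mem_A_ge k (n+1) y hy; omega
    · rcases hy with rfl | hy
      · omega
      · have := mem_A_ge k (n+1) y hy; omega
    · have := mem_A_ge k (n+1) y hy; omega

lemma len_le_one {l : List ℕ} (h1 : l.Pairwise (· < ·)) (h2 : l.Pairwise (· > ·)) :
    l.length ≤ 1 := by
  match l with
  | [] => simp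
  | [a] => simp
  | a :: b :: l =>
    simp only [List.pairwise_cons] at h1 h2
    have := h1.1 b (by simp)
    have := h2.1 b (by simp)
    omega

lemma incr_sublist_B_len : ∀ (k : ℕ) {n : ℕ} {D : List ℕ},
    D <+ Bseq n k → D.Pairwise (· < ·) → D.length ≤ k
  | 0, n, D => by
    intro h _
    simp only [Bseq, List.sublist_nil] at h
    simp [h]
  | (k+1), n, D => by
    intro h hp
    have h' : D <+ [3*n+2, 3*n+1, 3*n] ++ Bseq (n+1) k := h
    rw [List.sublist_append_iff] at h'
    obtain ⟨D1, D2, rfl, h1, h2⟩ := h'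
    rw [List.pairwise_append] at hp
    have hd1 : D1.length ≤ 1 := by
      refine len_le_one hp.1 (List.Pairwise.sublist h1 ?_)
      simp only [List.pairwise_cons]
      refine ⟨?_, ?_, by simp⟩ <;> (intro y hy; simp at hy; omega)
    have hd2 := incr_sublist_B_len k h2 hp.2.1
    simp only [List.length_append]
    omega

lemma cons_sub_A {x : ℕ} {rest : List ℕ} {n k : ℕ}
    (hx : x = 3*n ∨ x = 3*n+1 ∨ x = 3*n+2)
    (h : rest <+ Aseq (n+1) k) : x :: rest <+ Aseq n (k+1) := by
  show x :: rest <+ 3*n :: (3*n+1) :: (3*n+2) :: Aseq (n+1) k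
  rcases hx with rfl | rfl | rfl
  · exact .cons₂ _ (.cons _ (.cons _ h))
  · exact .cons _ (.cons₂ _ (.cons _ h))
  · exact .cons _ (.cons _ (.cons₂ _ h))

lemma cons_sub_B {x : ℕ} {rest : List ℕ} {n k : ℕ}
    (hx : x = 3*n ∨ x = 3*n+1 ∨ x = 3*n+2)
    (h : rest <+ Bseq (n+1) k) : x :: rest <+ Bseq n (k+1) := by
  show x :: rest <+ (3*n+2) :: (3*n+1) :: 3*n :: Bseq (n+1) k
  rcases hx with rfl | rfl | rfl
  · exact .cons _ (.cons _ (.cons₂ _ h))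
  · exact .cons _ (.cons₂ _ (.cons _ h))
  · exact .cons₂ _ (.cons _ (.cons _ h))

lemma csub_A : ∀ (c : List (Fin 3)) (n : ℕ), Cseq n c <+ Aseq n c.length
  | [], n => by simp [Cseq, Aseq]
  | (a :: c), n => by
    show (3*n + (a:ℕ)) :: Cseq (n+1) c <+ Aseq n (c.length + 1)
    refine cons_sub_A ?_ (csub_A c (n+1))
    have := a.isLt; omega

lemma csub_B : ∀ (c : List (Fin 3)) (n : ℕ), Cseq n c <+ Bseq n c.length
  | [], n => by simp [Cseq, Bseq]
  | (a :: c), n => by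
    show (3*n + (a:ℕ)) :: Cseq (n+1) c <+ Bseq n (c.length + 1)
    refine cons_sub_B ?_ (csub_B c (n+1))
    have := a.isLt; omega

lemma C_inj : ∀ (c c' : List (Fin 3)) (n : ℕ), Cseq n c = Cseq n c' → c = c'
  | [], [], _ => by simp
  | [], (a :: c'), n => by simp [Cseq]
  | (a :: c), [], n => by simp [Cseq]
  | (a :: c), (a' :: c'), n => by
    intro h
    simp only [Cseq, List.cons.injEq] at h
    have ha : a = a' := Fin.ext (by omega)
    rw [ha, C_inj c c' (n+1) h.2]

lemma isLCS_C (k : ℕ) (c : List (Fin 3)) (hc : c.length = k) :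
    IsLCS (Aseq 0 k) (Bseq 0 k) (Cseq 0 c) := by
  refine ⟨hc ▸ csub_A c 0, hc ▸ csub_B c 0, ?_⟩
  intro D hDA hDB
  rw [length_C c 0, hc]
  exact incr_sublist_B_len k hDB (List.Pairwise.sublist hDA (pairwise_A k 0))

end LCSaux

open LCSaux in
theorem stmt1 (t : ℕ) (ht : 0 < t) (h6 : 6 ∣ t) :
    (∃ A B : List ℕ, A.length + B.length = t ∧
        3 ^ (t / 6) ≤ {C : List ℕ | IsLCS A B C}.ncard) ∧
      (1.2 : ℝ) ^ t < (3 : ℝ) ^ (t / 6) := by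
  obtain ⟨k, rfl⟩ := h6
  have hk : 0 < k := by omega
  have hdiv : 6 * k / 6 = k := by omega
  rw [hdiv]
  constructor
  · refine ⟨Aseq 0 k, Bseq 0 k, by rw [length_A, length_B]; ring, ?_⟩
    set S : Set (List ℕ) := {C : List ℕ | IsLCS (Aseq 0 k) (Bseq 0 k) C} with hS
    have hfin : S.Finite := by
      refine Set.Finite.subset (Aseq 0 k).sublists.finite_toSet ?_
      intro C hC
      simpa [List.mem_sublists] using hC.1
    set g : (Fin k → Fin 3) → List ℕ := fun f => Cseq 0 (List.ofFn f) with hg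
    have hginj : Function.Injective g := by
      intro f f' h
      exact List.ofFn_injective (C_inj _ _ 0 h)
    have hsub : g '' Set.univ ⊆ S := by
      rintro _ ⟨f, -, rfl⟩
      exact isLCS_C k (List.ofFn f) (by simp)
    calc 3 ^ k = (Set.univ : Set (Fin k → Fin 3)).ncard := by
          simp [Set.ncard_univ, Nat.card_eq_fintype_card]
      _ = (g '' Set.univ).ncard := (Set.ncard_image_of_injective _ hginj).symm
      _ ≤ S.ncard := Set.ncard_le_ncard hsub hfin
  · have h1 : (1.2 : ℝ) ^ (6 * k) = ((1.2 : ℝ) ^ 6) ^ k := by rw [pow_mul]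
    rw [h1]
    refine pow_lt_pow_left₀ ?_ (by positivity) (by omega)
    norm_num
end

section
/- Let A and B be sequences and let C and C' be two longest common subsequences of A and B whose first characters differ. For any embedding of C as (p_1,q_1),...,(p_l,q_l) and any embedding of C' as (p'_1,q'_1),...,(p'_l,q'_l), the initial character embeddings cross: either p_1 < p'_1 and q'_1 < q_1, or p'_1 < p_1 and q_1 < q'_1. -/
/-- `(p, q)` is an embedding of the common subsequence `C` in `A` and `B`:
strictly increasing position sequences matching the characters of `C`. -/
def IsEmbedding {α : Type*} (A B C : List α) (p q : ℕ → ℕ) : Prop :=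
  StrictMonoOn p (Set.Iio C.length) ∧ StrictMonoOn q (Set.Iio C.length) ∧
    ∀ i < C.length, A[p i]? = C[i]? ∧ B[q i]? = C[i]?

/-!
If the first characters were embedded in parallel, say `p 0 < p' 0` and `q 0 < q' 0`, then the
first character of `C` could be prepended to `C'`, giving a common subsequence longer than the
LCS `C'`. Different first characters also rule out `p 0 = p' 0` and `q 0 = q' 0`.
-/

namespace List

variable {α : Type*} {l l' : List α} {f : ℕ → ℕ}

theorem sublist_of_strictMonoOn_getElem?_eq (hf : StrictMonoOn f (Set.Iio l.length))
    (h : ∀ i < l.length, l'[f i]? = l[i]?) : l <+ l' := by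
  have hlt : ∀ i : Fin l.length, f i < l'.length := fun i =>
    (getElem?_eq_some_iff.mp ((h i i.2).trans (getElem?_eq_getElem i.2))).1
  refine sublist_iff_exists_fin_orderEmbedding_get_eq.mpr
    ⟨OrderEmbedding.ofStrictMono (fun i => ⟨f i, hlt i⟩) fun _ _ hij => hf (by simp) (by simp) hij,
      fun i => ?_⟩
  change l[i] = l'[f i]'(hlt i)
  simpa [getElem?_eq_getElem i.2, getElem?_eq_getElem (hlt i)] using (h i i.2).symm

theorem cons_sublist_of_strictMonoOn_getElem?_eq {k : ℕ} {x : α}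
    (hf : StrictMonoOn f (Set.Iio l.length)) (h : ∀ i < l.length, l'[f i]? = l[i]?)
    (hx : l'[k]? = some x) (hk : k < f 0) : x :: l <+ l' := by
  refine sublist_of_strictMonoOn_getElem?_eq (f := fun i => i.casesOn k fun i => f i) ?_ ?_
  · rintro (_ | i) hi (_ | j) hj hij
    · exact absurd hij (lt_irrefl 0)
    · have hj : j < l.length := by simpa using hj
      exact hk.trans_le <| hf.monotoneOn (j.zero_le.trans_lt hj) hj j.zero_le
    · exact absurd hij (Nat.not_lt_zero _)
    · exact hf (by simpa using hi) (by simpa using hj) (Nat.succ_lt_succ_iff.mp hij)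
  · rintro (_ | i) hi
    · exact hx
    · exact h i (Nat.succ_lt_succ_iff.mp hi)

end List

section

variable {α : Type*} {A B C : List α} {p q : ℕ → ℕ}

theorem IsEmbedding.getElem?_head (he : IsEmbedding A B C p q) (hC : C ≠ []) :
    A[p 0]? = C.head? ∧ B[q 0]? = C.head? := by
  rw [List.head?_eq_getElem?]
  exact he.2.2 0 (List.length_pos_iff.mpr hC)

theorem IsLCS.not_lt_embedding_head (hC : IsLCS A B C) (he : IsEmbedding A B C p q)
    {i j : ℕ} {x : α} (hA : A[i]? = some x) (hB : B[j]? = some x) :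
    ¬(i < p 0 ∧ j < q 0) := by
  rintro ⟨hi, hj⟩
  have hxA :=
    List.cons_sublist_of_strictMonoOn_getElem?_eq he.1 (fun k hk => (he.2.2 k hk).1) hA hi
  have hxB :=
    List.cons_sublist_of_strictMonoOn_getElem?_eq he.2.1 (fun k hk => (he.2.2 k hk).2) hB hj
  simpa using hC.2.2 _ hxA hxB

end

theorem stmt2 {α : Type*} (A B C C' : List α) (p q p' q' : ℕ → ℕ)
    (hC : IsLCS A B C) (hC' : IsLCS A B C')
    (hCne : C ≠ []) (hC'ne : C' ≠ []) (hne : C.head? ≠ C'.head?)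
    (he : IsEmbedding A B C p q) (he' : IsEmbedding A B C' p' q') :
    (p 0 < p' 0 ∧ q' 0 < q 0) ∨ (p' 0 < p 0 ∧ q 0 < q' 0) := by
  obtain ⟨hA, hB⟩ := he.getElem?_head hCne
  obtain ⟨hA', hB'⟩ := he'.getElem?_head hC'ne
  have hp : p 0 ≠ p' 0 := fun h => hne (by rw [← hA, ← hA', h])
  have hq : q 0 ≠ q' 0 := fun h => hne (by rw [← hB, ← hB', h])
  have h₁ := hC'.not_lt_embedding_head he'
    (hA.trans (List.head?_eq_some_head hCne)) (hB.trans (List.head?_eq_some_head hCne))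
  have h₂ := hC.not_lt_embedding_head he
    (hA'.trans (List.head?_eq_some_head hC'ne)) (hB'.trans (List.head?_eq_some_head hC'ne))
  omega
end

section
/- For all t ≥ 0, the maximum number D(t) of distinct longest common subsequences of two sequences of total length t satisfies D(t) ≤ 4^(t/5) < 1.32^t. -/
namespace List

variable {α : Type*} [BEq α]

def afterFirst (l : List α) (a : α) : List α := l.drop (l.idxOf a + 1)

theorem length_afterFirst (l : List α) (a : α) :
    (l.afterFirst a).length = l.length - (l.idxOf a + 1) :=
  length_drop

variable [LawfulBEq α]

theorem cons_afterFirst {l : List α} {a : α} (h : a ∈ l) :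
    a :: l.afterFirst a = l.drop (l.idxOf a) := by
  rw [drop_eq_getElem_cons (idxOf_lt_length_iff.2 h), getElem_idxOf]
  rfl

theorem cons_sublist_iff_sublist_afterFirst {l s : List α} {a : α} :
    a :: s <+ l ↔ a ∈ l ∧ s <+ l.afterFirst a := by
  refine ⟨fun h => ⟨h.subset mem_cons_self, ?_⟩, fun ⟨ha, hs⟩ =>
    (cons_afterFirst ha ▸ hs.cons_cons a).trans (drop_sublist _ _)⟩
  induction l with
  | nil => exact absurd h (by simp)
  | cons b l ih =>
    by_cases hb : b = a
    · subst hb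
      simpa [afterFirst] using h
    · have hl : a :: s <+ l := by simpa [sublist_cons_iff, Ne.symm hb] using h
      simpa [afterFirst, idxOf_cons_ne _ hb] using ih hl

theorem cons_cons_sublist_of_idxOf_lt {l s : List α} {a b : α} (ha : a ∈ l)
    (hab : l.idxOf a < l.idxOf b) (h : b :: s <+ l) : a :: b :: s <+ l := by
  obtain ⟨hb, hs⟩ := cons_sublist_iff_sublist_afterFirst.1 h
  refine cons_sublist_iff_sublist_afterFirst.2 ⟨ha, ?_⟩
  calc b :: s <+ b :: l.afterFirst b := hs.cons_cons b
    _ = l.drop (l.idxOf b) := cons_afterFirst hb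
    _ <+ l.afterFirst a := drop_sublist_drop_left l hab

end List

theorem Finset.card_le_add_add_one_of_lt_imp_lt {ι : Type*} {s : Finset ι} {f g : ι → ℕ}
    (hf : Set.InjOn f s) (hfg : ∀ i ∈ s, ∀ j ∈ s, f i < f j → g j < g i) {i : ι}
    (hi : i ∈ s) : s.card ≤ f i + g i + 1 := by
  classical
  have below : (s.filter (f · ≤ f i)).card ≤ f i + 1 := by
    simpa using Finset.card_le_card_of_injOn f (t := Finset.range (f i + 1))
      (fun j hj => by simp only [coe_filter, Set.mem_ofPred_eq] at hj; simp; omega)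
      (hf.mono (filter_subset _ s))
  have above : (s.filter (¬ f · ≤ f i)).card ≤ g i := by
    simpa using Finset.card_le_card_of_injOn g (t := Finset.range (g i))
      (fun j hj => by
        simp only [coe_filter, Set.mem_ofPred_eq] at hj
        simpa using hfg i hi j hj.1 hj.2)
      (fun j hj k hk hjk => by
        simp only [coe_filter, Set.mem_ofPred_eq] at hj hk
        rcases lt_trichotomy (f j) (f k) with hlt | heq | hgt
        · exact absurd hjk (hfg j hj.1 k hk.1 hlt).ne'
        · exact hf hj.1 hk.1 heq
        · exact absurd hjk (hfg k hk.1 j hj.1 hgt).ne)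
  rw [← Finset.card_filter_add_card_filter_not (f · ≤ f i)]
  omega

section LCS

variable {α : Type*}

theorem setOf_isLCS_finite (A B : List α) : {C | IsLCS A B C}.Finite :=
  A.sublists.finite_toSet.subset fun _ hC => List.mem_sublists.2 hC.1

namespace IsLCS

variable {A B C : List α} {x y : α}

theorem eq_nil_of_isLCS_nil (h0 : IsLCS A B []) (h : IsLCS A B C) : C = [] :=
  List.length_eq_zero_iff.1 (Nat.le_zero.1 (h0.2.2 C h.1 h.2.1))

variable [BEq α] [LawfulBEq α]

theorem afterFirst (h : IsLCS A B (x :: C)) : IsLCS (A.afterFirst x) (B.afterFirst x) C := by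
  obtain ⟨hA, hB, hmax⟩ := h
  rw [List.cons_sublist_iff_sublist_afterFirst] at hA hB
  refine ⟨hA.2, hB.2, fun D hDA hDB => ?_⟩
  simpa using hmax (x :: D) (List.cons_sublist_iff_sublist_afterFirst.2 ⟨hA.1, hDA⟩)
    (List.cons_sublist_iff_sublist_afterFirst.2 ⟨hB.1, hDB⟩)

theorem idxOf_lt_of_idxOf_lt (h : IsLCS A B (y :: C)) (hxA : x ∈ A) (hxB : x ∈ B)
    (hA : A.idxOf x < A.idxOf y) : B.idxOf y < B.idxOf x := by
  by_contra! hB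
  have hxy : x ≠ y := by
    rintro rfl
    exact lt_irrefl _ hA
  have hB' : B.idxOf x < B.idxOf y := lt_of_le_of_ne hB (mt (List.idxOf_inj hxB).1 hxy)
  simpa using h.2.2 _ (List.cons_cons_sublist_of_idxOf_lt hxA hA h.1)
    (List.cons_cons_sublist_of_idxOf_lt hxB hB' h.2.1)

end IsLCS

open Classical in
noncomputable def lcsHeads (A B : List α) : Finset α :=
  A.toFinset.filter fun x => ∃ C, IsLCS A B (x :: C)

theorem mem_lcsHeads {A B : List α} {x : α} :
    x ∈ lcsHeads A B ↔ ∃ C, IsLCS A B (x :: C) := by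
  simp only [lcsHeads, Finset.mem_filter, List.mem_toFinset, and_iff_right_iff_imp]
  exact fun ⟨_, hC⟩ => hC.1.subset List.mem_cons_self

theorem ncard_setOf_isLCS_le_one {A B : List α} (h0 : IsLCS A B []) :
    {C | IsLCS A B C}.ncard ≤ 1 :=
  (Set.ncard_le_one (setOf_isLCS_finite A B)).2 fun _ hC _ hD =>
    (h0.eq_nil_of_isLCS_nil hC).trans (h0.eq_nil_of_isLCS_nil hD).symm

variable [BEq α] [LawfulBEq α]

theorem ncard_setOf_isLCS_le_sum {A B : List α} (h0 : ¬IsLCS A B []) :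
    {C | IsLCS A B C}.ncard ≤
      ∑ x ∈ lcsHeads A B, {C | IsLCS (A.afterFirst x) (B.afterFirst x) C}.ncard := by
  have hcover : {C | IsLCS A B C} ⊆
      ⋃ x ∈ lcsHeads A B, (x :: ·) '' {C | IsLCS (A.afterFirst x) (B.afterFirst x) C} := by
    rintro (_ | ⟨x, C⟩) hC
    · exact absurd hC h0
    · exact Set.mem_biUnion (mem_lcsHeads.2 ⟨C, hC⟩) ⟨C, IsLCS.afterFirst hC, rfl⟩
  refine (Set.ncard_le_ncard hcover ?_).trans <| (Finset.set_ncard_biUnion_le _ _).trans <|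
    Finset.sum_le_sum fun x _ => Set.ncard_image_le (setOf_isLCS_finite _ _)
  exact (lcsHeads A B).finite_toSet.biUnion fun x _ => (setOf_isLCS_finite _ _).image _

theorem card_lcsHeads_add_length_afterFirst_le {A B : List α} {x : α} (hx : x ∈ lcsHeads A B) :
    (lcsHeads A B).card + 1 + ((A.afterFirst x).length + (B.afterFirst x).length) ≤
      A.length + B.length := by
  have mem_both : ∀ y ∈ lcsHeads A B, y ∈ A ∧ y ∈ B := fun y hy => by
    obtain ⟨C, hC⟩ := mem_lcsHeads.1 hy
    exact ⟨hC.1.subset List.mem_cons_self, hC.2.1.subset List.mem_cons_self⟩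
  have hcard := (lcsHeads A B).card_le_add_add_one_of_lt_imp_lt (f := A.idxOf) (g := B.idxOf)
    (fun y hy _ _ hyz => (List.idxOf_inj (mem_both y hy).1).1 hyz)
    (fun y hy z hz hyz => by
      obtain ⟨C, hC⟩ := mem_lcsHeads.1 hz
      exact hC.idxOf_lt_of_idxOf_lt (mem_both y hy).1 (mem_both y hy).2 hyz)
    hx
  have hA := List.idxOf_lt_length_iff.2 (mem_both x hx).1
  have hB := List.idxOf_lt_length_iff.2 (mem_both x hx).2
  rw [List.length_afterFirst, List.length_afterFirst]
  omega

end LCS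

theorem pow_five_le_four_pow_succ (m : ℕ) : m ^ 5 ≤ 4 ^ (m + 1) := by
  induction m with
  | zero => norm_num
  | succ n ih =>
    rcases Nat.lt_or_ge n 4 with hn | hn
    · interval_cases n <;> norm_num
    · have h : (4 * (n + 1)) ^ 5 ≤ (5 * n) ^ 5 := Nat.pow_le_pow_left (by omega) 5
      rw [mul_pow, mul_pow] at h
      rw [pow_succ 4]
      linarith [Nat.zero_le (4 ^ (n + 1))]

theorem natCast_le_four_rpow (m : ℕ) : (m : ℝ) ≤ 4 ^ (((m : ℝ) + 1) / 5) := by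
  rw [div_eq_mul_inv, Real.rpow_mul (by norm_num),
    Real.le_rpow_inv_iff_of_pos (by positivity) (by positivity) (by norm_num)]
  exact_mod_cast pow_five_le_four_pow_succ m

theorem natCast_mul_four_rpow_le (m : ℕ) (s : ℝ) :
    m * (4 : ℝ) ^ ((s - (m + 1)) / 5) ≤ 4 ^ (s / 5) :=
  calc m * (4 : ℝ) ^ ((s - (m + 1)) / 5)
      ≤ 4 ^ (((m : ℝ) + 1) / 5) * 4 ^ ((s - (m + 1)) / 5) := by
        gcongr
        exact natCast_le_four_rpow m
    _ = 4 ^ (s / 5) := by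
        rw [← Real.rpow_add (by norm_num)]
        ring_nf

theorem four_rpow_div_five_lt {t : ℕ} (ht : 0 < t) : (4 : ℝ) ^ ((t : ℝ) / 5) < 1.32 ^ t := by
  have h : (4 : ℝ) ^ (5 : ℝ)⁻¹ < 1.32 := by
    rw [Real.rpow_inv_lt_iff_of_pos (by norm_num) (by norm_num) (by norm_num)]
    norm_num
  calc (4 : ℝ) ^ ((t : ℝ) / 5) = ((4 : ℝ) ^ (5 : ℝ)⁻¹) ^ t := by
        rw [← Real.rpow_mul_natCast (by norm_num)]
        ring_nf
    _ < 1.32 ^ t := pow_lt_pow_left₀ h (by positivity) ht.ne'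

theorem ncard_setOf_isLCS_le {α : Type*} (A B : List α) :
    ({C | IsLCS A B C}.ncard : ℝ) ≤ 4 ^ (((A.length + B.length : ℕ) : ℝ) / 5) := by
  classical
  induction hn : A.length + B.length using Nat.strong_induction_on generalizing A B with
  | _ n ih =>
  by_cases h0 : IsLCS A B []
  · exact (Nat.cast_le_one.2 (ncard_setOf_isLCS_le_one h0)).trans
      (Real.one_le_rpow (by norm_num) (by positivity))
  set m := (lcsHeads A B).card
  calc ({C | IsLCS A B C}.ncard : ℝ)
      ≤ ∑ x ∈ lcsHeads A B, ({C | IsLCS (A.afterFirst x) (B.afterFirst x) C}.ncard : ℝ) :=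
        mod_cast ncard_setOf_isLCS_le_sum h0
    _ ≤ ∑ _x ∈ lcsHeads A B, (4 : ℝ) ^ (((n : ℝ) - (m + 1)) / 5) := by
        refine Finset.sum_le_sum fun x hx => ?_
        have hlen := hn ▸ card_lcsHeads_add_length_afterFirst_le hx
        have hlen' :
            (m : ℝ) + 1 + ((A.afterFirst x).length + (B.afterFirst x).length : ℕ) ≤ n :=
          mod_cast hlen
        exact (ih _ (by omega) _ _ rfl).trans
          (Real.rpow_le_rpow_of_exponent_le (by norm_num) (by linarith))
    _ = m * (4 : ℝ) ^ (((n : ℝ) - (m + 1)) / 5) := by simp [m]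
    _ ≤ 4 ^ ((n : ℝ) / 5) := natCast_mul_four_rpow_le _ _

theorem stmt3 {α : Type*} (t : ℕ) (A B : List α) (h : A.length + B.length = t) :
    ({C : List α | IsLCS A B C}.ncard : ℝ) ≤ (4 : ℝ) ^ ((t : ℝ) / 5) ∧
      (0 < t → (4 : ℝ) ^ ((t : ℝ) / 5) < (1.32 : ℝ) ^ t) := by
  subst h
  exact ⟨ncard_setOf_isLCS_le A B, four_rpow_div_five_lt⟩
end

section
/- If neither of two sequences A and B (with |A| + |B| = t) contains a repeated character, then the number of distinct longest common subsequences of A and B is at most 3^((⌊t/2⌋ - 2z)/3) · 2^z, where z = (-⌊t/2⌋) mod 3. -/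
/-!
Call the *level* of a symbol `x` the largest `n` such that `x` ends a common subsequence of
`A` and `B` of length `n + 1`. Because `A` and `B` have no repeated symbols, any common
subsequence ending in `x` can be glued in front of the part of an LCS that follows `x`; hence
the `i`-th symbol of every LCS has level exactly `i`. An LCS of length `L` is therefore
determined by a choice of one symbol from each of the `L` disjoint, nonempty level classes,
which together contain at most `⌊t/2⌋` common symbols. So the number of LCSs is at most a
product of positive integers with sum at most `⌊t/2⌋`, and such a product is maximised by
splitting into threes, with the remainder absorbed by at most two twos.
-/

/-- The largest product of positive integers summing to `n`: threes, with a two or a four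
absorbing the remainder. -/
def maxPartProd : ℕ → ℕ
  | 0 => 1
  | 1 => 1
  | 2 => 2
  | 3 => 3
  | 4 => 4
  | n + 5 => 3 * maxPartProd (n + 2)

lemma maxPartProd_le_succ (n : ℕ) : maxPartProd n ≤ maxPartProd (n + 1) := by
  induction n using Nat.strong_induction_on with
  | _ n ih =>
    match n with
    | 0 | 1 | 2 | 3 | 4 => decide
    | n + 5 => exact Nat.mul_le_mul_left 3 (ih (n + 2) (by omega))

lemma maxPartProd_mono : Monotone maxPartProd := monotone_nat_of_le_succ maxPartProd_le_succ

lemma two_mul_maxPartProd_le (n : ℕ) : 2 * maxPartProd n ≤ maxPartProd (n + 2) := by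
  induction n using Nat.strong_induction_on with
  | _ n ih =>
    match n with
    | 0 | 1 | 2 | 3 | 4 => decide
    | n + 5 =>
      show 2 * (3 * maxPartProd (n + 2)) ≤ 3 * maxPartProd (n + 4)
      rw [Nat.mul_left_comm]
      exact Nat.mul_le_mul_left 3 (ih (n + 2) (by omega))

lemma three_mul_maxPartProd_le (n : ℕ) : 3 * maxPartProd n ≤ maxPartProd (n + 3) := by
  match n with
  | 0 | 1 => decide
  | n + 2 => exact le_rfl

lemma mul_maxPartProd_le {k : ℕ} (hk : 1 ≤ k) (m : ℕ) :
    k * maxPartProd m ≤ maxPartProd (m + k) := by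
  induction k using Nat.strong_induction_on with
  | _ k ih =>
    match k with
    | 1 => simpa using maxPartProd_le_succ m
    | 2 => exact two_mul_maxPartProd_le m
    | 3 => exact three_mul_maxPartProd_le m
    | k + 4 =>
      calc (k + 4) * maxPartProd m ≤ 2 * ((k + 2) * maxPartProd m) := by
            rw [← Nat.mul_assoc]; exact Nat.mul_le_mul_right _ (by omega)
        _ ≤ 2 * maxPartProd (m + (k + 2)) :=
            Nat.mul_le_mul_left 2 (ih (k + 2) (by omega) (by omega))
        _ ≤ maxPartProd (m + (k + 4)) := two_mul_maxPartProd_le _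

lemma prod_le_maxPartProd {ι : Type*} (s : Finset ι) (g : ι → ℕ)
    (hg : ∀ i ∈ s, 1 ≤ g i) : ∏ i ∈ s, g i ≤ maxPartProd (∑ i ∈ s, g i) := by
  induction s using Finset.cons_induction with
  | empty => simp [maxPartProd]
  | cons a s _ ih =>
    rw [Finset.prod_cons, Finset.sum_cons, Nat.add_comm]
    calc g a * ∏ i ∈ s, g i ≤ g a * maxPartProd (∑ i ∈ s, g i) :=
          Nat.mul_le_mul_left _ (ih fun i hi => hg i (Finset.mem_cons_of_mem hi))
      _ ≤ maxPartProd (∑ i ∈ s, g i + g a) :=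
          mul_maxPartProd_le (hg a (Finset.mem_cons_self a s)) _

lemma maxPartProd_le_pow (n : ℕ) :
    maxPartProd n ≤ 3 ^ ((n - 2 * ((3 - n % 3) % 3)) / 3) * 2 ^ ((3 - n % 3) % 3) := by
  induction n using Nat.strong_induction_on with
  | _ n ih =>
    match n with
    | 0 | 1 | 2 | 3 | 4 => decide
    | m + 5 =>
      have hz : (3 - (m + 5) % 3) % 3 = (3 - (m + 2) % 3) % 3 := by omega
      set z := (3 - (m + 2) % 3) % 3
      have hdiv : (m + 5 - 2 * z) / 3 = (m + 2 - 2 * z) / 3 + 1 := by omega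
      rw [hz, hdiv, pow_succ]
      calc 3 * maxPartProd (m + 2) ≤ 3 * (3 ^ ((m + 2 - 2 * z) / 3) * 2 ^ z) :=
            Nat.mul_le_mul_left 3 (ih (m + 2) (by omega))
        _ = 3 ^ ((m + 2 - 2 * z) / 3) * 3 * 2 ^ z := by ring

section Sublist

open List

variable {α : Type*}

lemma List.cons_sublist_append_cons_of_notMem {x : α} {l P Q : List α} (hx : x ∉ P)
    (h : x :: l <+ P ++ x :: Q) : l <+ Q := by
  obtain ⟨_ | ⟨y, r⟩, l₂, heq, h₁, h₂⟩ := sublist_append_iff.1 h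
  · rw [nil_append] at heq
    exact cons_sublist_cons.1 (heq ▸ h₂)
  · obtain ⟨rfl, -⟩ := cons.inj heq
    exact absurd (h₁.subset mem_cons_self) hx

lemma List.append_singleton_sublist_append_cons_of_notMem {x : α} {l P Q : List α}
    (hx : x ∉ Q) (h : l ++ [x] <+ P ++ x :: Q) : l <+ P := by
  rw [← reverse_sublist]
  refine cons_sublist_append_cons_of_notMem (Q := P.reverse) (mem_reverse.not.2 hx) ?_
  simpa using h.reverse

lemma List.Nodup.append_cons_sublist {A D E : List α} {x : α} (hA : A.Nodup)
    (hD : D ++ [x] <+ A) (hE : x :: E <+ A) : D ++ x :: E <+ A := by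
  obtain ⟨P, Q, rfl⟩ := append_of_mem (hE.subset mem_cons_self)
  have hx : x ∉ P ++ Q := (nodup_cons.1 (nodup_middle.1 hA)).1
  rw [mem_append, not_or] at hx
  exact (append_singleton_sublist_append_cons_of_notMem hx.2 hD).append
    (cons_sublist_cons.2 (cons_sublist_append_cons_of_notMem hx.1 hE))

lemma IsLCS.length_eq {A B C C' : List α} (hC : IsLCS A B C) (hC' : IsLCS A B C') :
    C.length = C'.length :=
  le_antisymm (hC'.2.2 C hC.1 hC.2.1) (hC.2.2 C' hC'.1 hC'.2.1)

noncomputable def level (A B : List α) (x : α) : ℕ :=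
  sSup {n | ∃ D : List α, D ++ [x] <+ A ∧ D ++ [x] <+ B ∧ D.length = n}

lemma length_le_level {A B D : List α} {x : α} (hDA : D ++ [x] <+ A) (hDB : D ++ [x] <+ B) :
    D.length ≤ level A B x := by
  refine le_csSup ⟨A.length, ?_⟩ ⟨D, hDA, hDB, rfl⟩
  rintro _ ⟨D', hD'A, -, rfl⟩
  have := hD'A.length_le
  rw [length_append] at this
  omega

lemma IsLCS.level_getElem {A B C : List α} (hA : A.Nodup) (hB : B.Nodup) (hC : IsLCS A B C)
    {i : ℕ} (hi : i < C.length) : level A B C[i] = i := by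
  have hprefix : C.take i ++ [C[i]] <+ C := take_concat_get' C i hi ▸ take_sublist _ _
  have hsuffix : C[i] :: C.drop (i + 1) <+ C := getElem_cons_drop hi ▸ drop_sublist _ _
  have hlen : (C.take i).length = i := by rw [length_take]; omega
  refine le_antisymm (csSup_le ⟨i, C.take i, hprefix.trans hC.1, hprefix.trans hC.2.1, hlen⟩ ?_)
    (hlen.ge.trans (length_le_level (hprefix.trans hC.1) (hprefix.trans hC.2.1)))
  rintro _ ⟨D, hDA, hDB, rfl⟩
  have := hC.2.2 _ (hA.append_cons_sublist hDA (hsuffix.trans hC.1))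
    (hB.append_cons_sublist hDB (hsuffix.trans hC.2.1))
  simp only [length_append, length_cons, length_drop] at this
  omega

end Sublist

section Counting

open Finset

variable {α : Type*}

lemma ncard_le_prod_card {S : Set (List α)} {L : ℕ} (V : ℕ → Finset α)
    (hS : ∀ C ∈ S, C.length = L ∧ ∀ i (hi : i < C.length), C[i] ∈ V i) :
    S.ncard ≤ ∏ i ∈ range L, #(V i) := by
  classical
  have hsub : S ⊆ (Fintype.piFinset fun i : Fin L => V i).image List.ofFn := by
    intro C hC
    obtain ⟨rfl, hCV⟩ := hS C hC
    exact mem_image.2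
      ⟨fun i => C[i], Fintype.mem_piFinset.2 fun i => hCV i i.2, List.ofFn_getElem⟩
  calc S.ncard ≤ #((Fintype.piFinset fun i : Fin L => V i).image List.ofFn) := by
        rw [← Set.ncard_coe_finset]; exact Set.ncard_le_ncard hsub (Finset.finite_toSet _)
    _ ≤ #(Fintype.piFinset fun i : Fin L => V i) := card_image_le
    _ = ∏ i ∈ range L, #(V i) := by
      rw [Fintype.card_piFinset, Fin.prod_univ_eq_prod_range (fun i => #(V i))]

lemma two_mul_card_toFinset_inter_le [DecidableEq α] (A B : List α) :
    2 * #(A.toFinset ∩ B.toFinset) ≤ A.length + B.length := by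
  have hA := (card_le_card (inter_subset_left (s₁ := A.toFinset) (s₂ := B.toFinset))).trans
    A.toFinset_card_le
  have hB := (card_le_card (inter_subset_right (s₁ := A.toFinset) (s₂ := B.toFinset))).trans
    B.toFinset_card_le
  omega

variable [DecidableEq α]

noncomputable def levelClass (A B : List α) (i : ℕ) : Finset α :=
  {x ∈ A.toFinset ∩ B.toFinset | level A B x = i}

lemma two_mul_sum_card_levelClass_le (A B : List α) (L : ℕ) :
    2 * ∑ i ∈ range L, #(levelClass A B i) ≤ A.length + B.length := by
  have := card_filter_le (A.toFinset ∩ B.toFinset) (level A B · ∈ range L)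
  have := two_mul_card_toFinset_inter_le A B
  unfold levelClass
  rw [sum_card_fiberwise_eq_card_filter]
  omega

lemma IsLCS.getElem_mem_levelClass {A B C : List α} (hA : A.Nodup) (hB : B.Nodup)
    (hC : IsLCS A B C) {i : ℕ} (hi : i < C.length) : C[i] ∈ levelClass A B i :=
  mem_filter.2 ⟨mem_inter.2 ⟨List.mem_toFinset.2 (hC.1.subset (List.getElem_mem hi)),
    List.mem_toFinset.2 (hC.2.1.subset (List.getElem_mem hi))⟩, hC.level_getElem hA hB hi⟩

end Counting

theorem stmt5 {α : Type*} (t : ℕ) (A B : List α) (hA : A.Nodup) (hB : B.Nodup)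
    (h : A.length + B.length = t) :
    {C : List α | IsLCS A B C}.ncard ≤
      3 ^ ((t / 2 - 2 * ((-(t / 2 : ℤ)) % 3).toNat) / 3) * 2 ^ ((-(t / 2 : ℤ)) % 3).toNat := by
  classical
  obtain hS | ⟨C₀, hC₀⟩ := Set.eq_empty_or_nonempty {C : List α | IsLCS A B C}
  · simp [hS]
  have hpos : ∀ i ∈ Finset.range C₀.length, 1 ≤ (levelClass A B i).card := fun i hi =>
    Finset.card_pos.2 ⟨_, hC₀.getElem_mem_levelClass hA hB (Finset.mem_range.1 hi)⟩
  have hsum : ∑ i ∈ Finset.range C₀.length, (levelClass A B i).card ≤ t / 2 := by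
    have := two_mul_sum_card_levelClass_le A B C₀.length
    omega
  have hz : ((-(t / 2 : ℤ)) % 3).toNat = (3 - t / 2 % 3) % 3 := by omega
  calc {C : List α | IsLCS A B C}.ncard
        ≤ ∏ i ∈ Finset.range C₀.length, (levelClass A B i).card :=
        ncard_le_prod_card _ fun C hC =>
          ⟨hC.length_eq hC₀, fun i hi => hC.getElem_mem_levelClass hA hB hi⟩
    _ ≤ maxPartProd (∑ i ∈ Finset.range C₀.length, (levelClass A B i).card) :=
        prod_le_maxPartProd _ _ hpos
    _ ≤ maxPartProd (t / 2) := maxPartProd_mono hsum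
    _ ≤ _ := hz ▸ maxPartProd_le_pow (t / 2)
end

section
/- For nonnegative integers m, n, l with l ≤ m ≤ n, the maximum over pairs of sequences A, B with |A| = m, |B| = n having an LCS of length l, of the number of embeddings of a single fixed LCS, equals max over 0 ≤ y ≤ l of C(m−y, l−y) · C(n+y−l, y), where C denotes the binomial coefficient. -/
/-- The number of embeddings of the string `C` as a common subsequence of `A` and `B`:
pairs of strictly increasing position sequences matching the characters of `C`. -/
noncomputable def EmbCount {α : Type*} (A B C : List α) : ℕ :=
  Nat.card {pq : (Fin C.length → Fin A.length) × (Fin C.length → Fin B.length) //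
    StrictMono pq.1 ∧ StrictMono pq.2 ∧
      ∀ i, A.get (pq.1 i) = C.get i ∧ B.get (pq.2 i) = C.get i}

/-!
Call a position `i` of the LCS `C` pinned in `A` if all embeddings of `C` into `A` send it to the
same place. If `i` were pinned in neither `A` nor `B`, two disagreeing embeddings into each would
embed `C` with the letter `C[i]` doubled into both, a common subsequence of length `l + 1`. So with
`a` positions pinned in `A` and `b` in `B`, `a + b ≥ l`. An embedding is determined by its image,
which is prescribed on the pinned positions, so there are at most `C(m - a, l - a)` embeddings
into `A` and `C(n - b, l - b)` into `B`; with `y = l - b ≤ a` this is at most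
`C(m - y, l - y) · C(n + y - l, y)`. The bound is attained by `A = 0^(m-y) 1^y`,
`B = 0^(l-y) 1^(n-l+y)` and `C = 0^(l-y) 1^y`.
-/

open Finset

lemma Nat.card_strictMono_fin (k n : ℕ) :
    Nat.card {f : Fin k → Fin n // StrictMono f} = n.choose k :=
  calc _ = Nat.card (Fin k ↪o Fin n) := Nat.card_congr
          { toFun := fun f => .ofStrictMono f.1 f.2
            invFun := fun f => ⟨f, f.strictMono⟩
            left_inv := fun _ => rfl
            right_inv := fun _ => rfl }
    _ = Nat.card (Set.powersetCard (Fin n) k) := Nat.card_congr Set.powersetCard.ofFinEmbEquiv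
    _ = n.choose k := by rw [Set.powersetCard.card, Nat.card_fin]

lemma Nat.choose_sub_le_choose_sub {n k a b : ℕ} (hkn : k ≤ n) (hab : a ≤ b) (hbk : b ≤ k) :
    (n - b).choose (k - b) ≤ (n - a).choose (k - a) := by
  rw [← Nat.choose_symm (by omega : k - b ≤ n - b),
    ← Nat.choose_symm (by omega : k - a ≤ n - a),
    show n - b - (k - b) = n - k by omega, show n - a - (k - a) = n - k by omega]
  exact Nat.choose_le_choose _ (by omega)

@[ext]
structure SubseqEmb {α : Type*} (C A : List α) where
  toFun : Fin C.length → Fin A.length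
  strictMono : StrictMono toFun
  get_eq : ∀ i, A.get (toFun i) = C.get i

namespace SubseqEmb

variable {α : Type*} {A C : List α}

instance : Finite (SubseqEmb C A) :=
  Finite.of_injective toFun fun _ _ => SubseqEmb.ext

lemma sublist (F : SubseqEmb C A) : C.Sublist A :=
  List.sublist_iff_exists_fin_orderEmbedding_get_eq.2
    ⟨.ofStrictMono F.toFun F.strictMono, fun i => (F.get_eq i).symm⟩

lemma take_sublist_take (F : SubseqEmb C A) {i : Fin C.length} {k : ℕ}
    (hk : (F.toFun i : ℕ) < k) : (C.take (i + 1)).Sublist (A.take k) := by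
  have hle (j : Fin (C.take (i + 1)).length) : (j : ℕ) ≤ i := by
    have := j.isLt; simp only [List.length_take] at this; omega
  let f (j : Fin (C.take (i + 1)).length) : Fin C.length := ⟨j, by have := hle j; omega⟩
  refine sublist ⟨fun j => ⟨F.toFun (f j), ?_⟩,
    fun j j' h => F.strictMono (show f j < f j' from h), fun j => by simpa using F.get_eq (f j)⟩
  have := F.strictMono.monotone (show f j ≤ i from hle j)
  simp only [List.length_take]; have := (F.toFun (f j)).isLt; omega

lemma drop_sublist_drop (F : SubseqEmb C A) {i : Fin C.length} {k : ℕ}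
    (hk : k ≤ (F.toFun i : ℕ)) : (C.drop i).Sublist (A.drop k) := by
  let f (j : Fin (C.drop i).length) : Fin C.length :=
    ⟨i + j, by have := j.isLt; simp only [List.length_drop] at this; omega⟩
  have hge (j) : k ≤ (F.toFun (f j) : ℕ) :=
    hk.trans (F.strictMono.monotone (show i ≤ f j from Nat.le_add_right _ _))
  refine sublist ⟨fun j => ⟨F.toFun (f j) - k, ?_⟩, fun j j' h => ?_, fun j => ?_⟩
  · simp only [List.length_drop]; have := (F.toFun (f j)).isLt; have := hge j; omega
  · have := F.strictMono (show f j < f j' from Nat.add_lt_add_left h _)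
    have := hge j
    simp only [Fin.mk_lt_mk]; omega
  · have := F.get_eq (f j)
    simp only [List.get_eq_getElem, List.getElem_drop] at this ⊢
    rw [← this]; congr 1; have := hge j; omega

/-- `C.take (i + 1) ++ C.drop i` is `C` with the letter `C[i]` doubled. -/
lemma take_succ_append_drop_sublist (F G : SubseqEmb C A) {i : Fin C.length}
    (h : F.toFun i ≠ G.toFun i) : (C.take (i + 1) ++ C.drop i).Sublist A := by
  wlog hlt : F.toFun i < G.toFun i generalizing F G
  · exact this G F h.symm (lt_of_le_of_ne (not_lt.1 hlt) h.symm)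
  rw [← List.take_append_drop (F.toFun i + 1) A]
  exact (F.take_sublist_take (Nat.lt_succ_self _)).append (G.drop_sublist_drop hlt)

open Classical in
noncomputable def pinned (C A : List α) : Finset (Fin C.length) :=
  {i | ∀ F G : SubseqEmb C A, F.toFun i = G.toFun i}

lemma mem_pinned {i : Fin C.length} :
    i ∈ pinned C A ↔ ∀ F G : SubseqEmb C A, F.toFun i = G.toFun i := by
  classical
  simp [pinned]

lemma ext_of_image_eq {F G : SubseqEmb C A} (h : univ.image F.toFun = univ.image G.toFun) :
    F = G := by
  refine SubseqEmb.ext ((F.strictMono.range_inj G.strictMono).1 ?_)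
  have := congrArg (fun s : Finset (Fin A.length) => (s : Set (Fin A.length))) h
  simpa only [coe_image, coe_univ, Set.image_univ] using this

/-- The image of the unpinned positions determines the embedding and avoids the (fixed) image of
the pinned ones. -/
lemma card_le_choose_pinned :
    Nat.card (SubseqEmb C A) ≤
      (A.length - #(pinned C A)).choose (C.length - #(pinned C A)) := by
  classical
  set R := pinned C A
  rcases isEmpty_or_nonempty (SubseqEmb C A) with h | ⟨⟨F₀⟩⟩
  · simp
  have hfixed (F : SubseqEmb C A) : R.image F.toFun = R.image F₀.toFun :=
    image_congr fun i hi => mem_pinned.1 hi F F₀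
  have hfree (F : SubseqEmb C A) :
      Rᶜ.image F.toFun ∈ powersetCard (C.length - #R) (R.image F₀.toFun)ᶜ := by
    refine mem_powersetCard.2 ⟨?_, ?_⟩
    · rw [← hfixed F, subset_compl_iff_disjoint_right, disjoint_image F.strictMono.injective]
      exact disjoint_compl_left
    · rw [card_image_of_injective _ F.strictMono.injective, card_compl, Fintype.card_fin]
  have hinj : Function.Injective fun F : SubseqEmb C A => (⟨Rᶜ.image F.toFun, hfree F⟩ :
      powersetCard (C.length - #R) (R.image F₀.toFun)ᶜ) := by
    intro F G hFG
    apply ext_of_image_eq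
    have hcompl : Rᶜ.image F.toFun = Rᶜ.image G.toFun := congrArg Subtype.val hFG
    rw [← union_compl R, image_union, image_union, hfixed F, hfixed G, hcompl]
  calc Nat.card (SubseqEmb C A)
      ≤ Nat.card (powersetCard (C.length - #R) (R.image F₀.toFun)ᶜ) :=
        Nat.card_le_card_of_injective _ hinj
    _ = _ := by
        rw [Nat.card_eq_fintype_card, Fintype.card_coe, card_powersetCard, card_compl,
          Fintype.card_fin, card_image_of_injective _ F₀.strictMono.injective]

lemma card_of_forall_eq {a : α} (hA : ∀ x ∈ A, x = a) (hC : ∀ x ∈ C, x = a) :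
    Nat.card (SubseqEmb C A) = A.length.choose C.length := by
  rw [← Nat.card_strictMono_fin]
  exact Nat.card_congr
    { toFun := fun F => ⟨F.toFun, F.strictMono⟩
      invFun := fun f => ⟨f.1, f.2, fun i => by
        rw [hA _ (List.get_mem _ _), hC _ (List.get_mem _ _)]⟩
      left_inv := fun _ => rfl
      right_inv := fun _ => rfl }

variable {A₁ A₂ C₁ C₂ : List α}

def append (F : SubseqEmb C₁ A₁) (G : SubseqEmb C₂ A₂) :
    SubseqEmb (C₁ ++ C₂) (A₁ ++ A₂) where
  toFun i :=
    if h : (i : ℕ) < C₁.length then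
      ⟨F.toFun ⟨i, h⟩, by simp only [List.length_append]; omega⟩
    else
      ⟨A₁.length + G.toFun ⟨i - C₁.length, by
          have := i.isLt; simp only [List.length_append] at this; omega⟩,
        by simp only [List.length_append]; omega⟩
  strictMono i j hij := by
    rw [Fin.lt_def] at hij ⊢
    dsimp only
    split_ifs with hi hj hj
    · exact F.strictMono (Fin.mk_lt_mk.2 hij)
    · simp only; omega
    · omega
    · simp only [Nat.add_lt_add_iff_left, Fin.val_fin_lt]
      exact G.strictMono (Fin.mk_lt_mk.2 (by omega))
  get_eq i := by
    simp only [List.get_eq_getElem]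
    split
    next hi =>
      rw [List.getElem_append_left hi, List.getElem_append_left (F.toFun _).isLt]
      simpa using F.get_eq ⟨i, hi⟩
    next hi =>
      rw [List.getElem_append_right (Nat.le_add_right _ _), List.getElem_append_right (by omega)]
      simpa using G.get_eq _

lemma append_injective :
    Function.Injective fun FG : SubseqEmb C₁ A₁ × SubseqEmb C₂ A₂ => FG.1.append FG.2 := by
  rintro ⟨F, G⟩ ⟨F', G'⟩ h
  have h' := congrArg SubseqEmb.toFun h
  simp only [append] at h'
  refine Prod.ext (SubseqEmb.ext (funext fun j => ?_)) (SubseqEmb.ext (funext fun j => ?_))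
  · have := congrArg Fin.val (congrFun h' ⟨j, by simp only [List.length_append]; omega⟩)
    simpa [j.isLt, Fin.val_inj] using this
  · have := congrArg Fin.val
      (congrFun h' ⟨C₁.length + j, by simp only [List.length_append]; omega⟩)
    simpa [Fin.val_inj] using this

lemma card_mul_card_le_card_append :
    Nat.card (SubseqEmb C₁ A₁) * Nat.card (SubseqEmb C₂ A₂) ≤
      Nat.card (SubseqEmb (C₁ ++ C₂) (A₁ ++ A₂)) := by
  rw [← Nat.card_prod]
  exact Nat.card_le_card_of_injective _ append_injective

end SubseqEmb

lemma embCount_eq_card_mul_card {α : Type*} (A B C : List α) :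
    EmbCount A B C = Nat.card (SubseqEmb C A) * Nat.card (SubseqEmb C B) := by
  rw [EmbCount, ← Nat.card_prod]
  exact Nat.card_congr
    { toFun := fun x => (⟨x.1.1, x.2.1, fun i => (x.2.2.2 i).1⟩,
        ⟨x.1.2, x.2.2.1, fun i => (x.2.2.2 i).2⟩)
      invFun := fun y => ⟨(y.1.1, y.2.1), y.1.2, y.2.2, fun i => ⟨y.1.3 i, y.2.3 i⟩⟩
      left_inv := fun _ => rfl
      right_inv := fun _ => rfl }

namespace IsLCS

variable {α : Type*} {A B C : List α}

lemma pinned_union_pinned (h : IsLCS A B C) :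
    SubseqEmb.pinned C A ∪ SubseqEmb.pinned C B = univ := by
  classical
  refine eq_univ_of_forall fun i => ?_
  by_contra hi
  simp only [mem_union, SubseqEmb.mem_pinned, not_or, not_forall] at hi
  obtain ⟨⟨F, G, hA⟩, ⟨F', G', hB⟩⟩ := hi
  have := h.2.2 _ (F.take_succ_append_drop_sublist G hA) (F'.take_succ_append_drop_sublist G' hB)
  simp only [List.length_append, List.length_take, List.length_drop] at this
  omega

lemma embCount_le_sup (h : IsLCS A B C) :
    EmbCount A B C ≤ (range (C.length + 1)).sup fun y =>
      (A.length - y).choose (C.length - y) * (B.length + y - C.length).choose y := by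
  classical
  set a := #(SubseqEmb.pinned C A)
  set b := #(SubseqEmb.pinned C B)
  have hab : C.length ≤ a + b := by
    simpa [h.pinned_union_pinned] using
      card_union_le (SubseqEmb.pinned C A) (SubseqEmb.pinned C B)
  have ha : a ≤ C.length := by simpa using card_le_univ (SubseqEmb.pinned C A)
  have hb : b ≤ C.length := by simpa using card_le_univ (SubseqEmb.pinned C B)
  have hCA := h.1.length_le
  refine le_trans ?_ (le_sup (f := fun y => (A.length - y).choose (C.length - y) *
    (B.length + y - C.length).choose y) (mem_range_succ_iff.2 (Nat.sub_le C.length b)))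
  rw [embCount_eq_card_mul_card]
  refine Nat.mul_le_mul ?_ ?_
  · exact SubseqEmb.card_le_choose_pinned.trans (Nat.choose_sub_le_choose_sub hCA (by omega) ha)
  · convert SubseqEmb.card_le_choose_pinned (C := C) (A := B) using 2; omega

end IsLCS

/-- The word `0^p 1^q`, with `false` for `0` and `true` for `1`. -/
def blocks (p q : ℕ) : List Bool := List.replicate p false ++ List.replicate q true

lemma length_blocks (p q : ℕ) : (blocks p q).length = p + q := by simp [blocks]

lemma count_false_blocks (p q : ℕ) : (blocks p q).count false = p := by
  simp [blocks, List.count_replicate]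

lemma count_true_blocks (p q : ℕ) : (blocks p q).count true = q := by
  simp [blocks, List.count_replicate]

/-- A common subsequence has at most `r` zeros, as `B` does, and at most `s` ones, as `A` does. -/
lemma isLCS_blocks {p q r s : ℕ} (hrp : r ≤ p) (hsq : s ≤ q) :
    IsLCS (blocks p s) (blocks r q) (blocks r s) := by
  refine ⟨(List.replicate_sublist_replicate _).2 hrp |>.append (List.Sublist.refl _),
    (List.Sublist.refl _).append ((List.replicate_sublist_replicate _).2 hsq), fun D hA hB => ?_⟩
  have hfalse := (hB.count_le false).trans_eq (count_false_blocks r q)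
  have htrue := (hA.count_le true).trans_eq (count_true_blocks p s)
  rw [← List.count_false_add_count_true, length_blocks]
  omega

lemma choose_mul_choose_le_card_blocks (p q r s : ℕ) :
    p.choose r * q.choose s ≤ Nat.card (SubseqEmb (blocks r s) (blocks p q)) := by
  have hzeros := SubseqEmb.card_of_forall_eq (A := List.replicate p false)
    (C := List.replicate r false) (fun _ => List.eq_of_mem_replicate)
    (fun _ => List.eq_of_mem_replicate)
  have hones := SubseqEmb.card_of_forall_eq (A := List.replicate q true)
    (C := List.replicate s true) (fun _ => List.eq_of_mem_replicate)
    (fun _ => List.eq_of_mem_replicate)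
  simp only [List.length_replicate] at hzeros hones
  rw [← hzeros, ← hones]
  exact SubseqEmb.card_mul_card_le_card_append

lemma choose_mul_choose_le_embCount_blocks {m n l y : ℕ} (hln : l ≤ n) :
    (m - y).choose (l - y) * (n + y - l).choose y ≤
      EmbCount (blocks (m - y) y) (blocks (l - y) (n - l + y)) (blocks (l - y) y) := by
  rw [embCount_eq_card_mul_card, show n + y - l = n - l + y by omega]
  refine Nat.mul_le_mul ?_ ?_
  · simpa using choose_mul_choose_le_card_blocks (m - y) y (l - y) y
  · simpa using choose_mul_choose_le_card_blocks (l - y) (n - l + y) (l - y) y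

theorem stmt8 (m n l : ℕ) (hlm : l ≤ m) (hmn : m ≤ n) :
    IsGreatest {e : ℕ | ∃ (α : Type) (A B C : List α),
        A.length = m ∧ B.length = n ∧ C.length = l ∧ IsLCS A B C ∧ e = EmbCount A B C}
      ((Finset.range (l + 1)).sup fun y =>
        Nat.choose (m - y) (l - y) * Nat.choose (n + y - l) y) := by
  obtain ⟨y, hy, hsup⟩ := exists_mem_eq_sup (range (l + 1)) nonempty_range_add_one
    fun y => (m - y).choose (l - y) * (n + y - l).choose y
  have hyl : y ≤ l := mem_range_succ_iff.1 hy
  have hA : (blocks (m - y) y).length = m := by rw [length_blocks]; omega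
  have hB : (blocks (l - y) (n - l + y)).length = n := by rw [length_blocks]; omega
  have hC : (blocks (l - y) y).length = l := by rw [length_blocks]; omega
  have h := isLCS_blocks (p := m - y) (q := n - l + y) (r := l - y) (s := y) (by omega) (by omega)
  refine ⟨⟨Bool, _, _, _, hA, hB, hC, h, le_antisymm ?_ ?_⟩, ?_⟩
  · rw [hsup]
    exact choose_mul_choose_le_embCount_blocks (hlm.trans hmn)
  · simpa only [hA, hB, hC] using h.embCount_le_sup
  · rintro _ ⟨α, A, B, C, rfl, rfl, rfl, hLCS, rfl⟩
    exact hLCS.embCount_le_sup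
end

section
/- For integers 0 ≤ l ≤ n, the maximum over 0 ≤ y ≤ l of C(n−y, l−y) · C(n+y−l, y) equals C(n−⌊l/2⌋, ⌈l/2⌉) · C(n−⌈l/2⌉, ⌊l/2⌋), i.e., the maximizing y is ⌊l/2⌋. -/
/-!
With `k = n - l`, symmetry of binomial coefficients turns the `y`-th term into
`C(n - y, k) * C(k + y, k)`, a product `C(a, k) * C(b, k)` with `a + b = n + k` fixed.
Since `m ↦ C(m, k)` is log-concave, moving one unit from the larger of `a`, `b` to the smaller
does not decrease the product, so the terms increase up to `y = ⌊l/2⌋`, where `a` and `b` are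
as balanced as possible, and decrease afterwards.
-/

namespace Nat

theorem choose_succ_mul_choose_le_choose_mul_choose_succ (k : ℕ) {a c : ℕ} (h : c ≤ a) :
    (a + 1).choose k * c.choose k ≤ a.choose k * (c + 1).choose k := by
  rcases lt_or_ge c k with hck | hkc
  · simp [choose_eq_zero_of_lt hck]
  have hpos : 0 < (a + 1 - k) * (c + 1) := Nat.mul_pos (by omega) c.succ_pos
  have hlin : (a + 1) * (c + 1 - k) ≤ (a + 1 - k) * (c + 1) := by
    zify [show k ≤ c + 1 by omega, show k ≤ a + 1 by omega]
    nlinarith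
  refine le_of_mul_le_mul_right ?_ hpos
  calc (a + 1).choose k * c.choose k * ((a + 1 - k) * (c + 1))
      = ((a + 1).choose k * (a + 1 - k)) * (c.choose k * (c + 1)) := by ring
    _ = (a.choose k * (c + 1).choose k) * ((a + 1) * (c + 1 - k)) := by
        rw [← choose_mul_succ_eq, choose_mul_succ_eq c]; ring
    _ ≤ (a.choose k * (c + 1).choose k) * ((a + 1 - k) * (c + 1)) := Nat.mul_le_mul_left _ hlin

theorem monotoneOn_choose_sub_mul_choose_add (n k : ℕ) :
    MonotoneOn (fun y => (n - y).choose k * (k + y).choose k) (Set.Iic ((n - k) / 2)) := by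
  refine monotoneOn_of_le_succ Set.ordConnected_Iic fun y _ _ hy => ?_
  simp only [Order.succ_eq_add_one, Set.mem_Iic] at hy ⊢
  rw [show n - y = n - (y + 1) + 1 by omega, ← add_assoc]
  exact choose_succ_mul_choose_le_choose_mul_choose_succ k (by omega)

theorem antitoneOn_choose_sub_mul_choose_add (n k : ℕ) :
    AntitoneOn (fun y => (n - y).choose k * (k + y).choose k) (Set.Icc ((n - k) / 2) n) := by
  refine antitoneOn_of_succ_le Set.ordConnected_Icc fun y _ hy hy' => ?_
  simp only [Order.succ_eq_add_one, Set.mem_Icc] at hy hy' ⊢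
  rw [show n - y = n - (y + 1) + 1 by omega, ← add_assoc, mul_comm,
    mul_comm ((n - (y + 1) + 1).choose k)]
  exact choose_succ_mul_choose_le_choose_mul_choose_succ k (by omega)

theorem choose_sub_mul_choose_add_le_middle (n k : ℕ) {y : ℕ} (hy : y ≤ n - k) :
    (n - y).choose k * (k + y).choose k ≤
      (n - (n - k) / 2).choose k * (k + (n - k) / 2).choose k := by
  rcases le_total y ((n - k) / 2) with hle | hge
  · exact monotoneOn_choose_sub_mul_choose_add n k hle (Set.mem_Iic.2 le_rfl) hle
  · exact antitoneOn_choose_sub_mul_choose_add n k ⟨le_rfl, by omega⟩ ⟨hge, by omega⟩ hge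

theorem choose_sub_mul_choose_add_sub_eq {n l y : ℕ} (hl : l ≤ n) (hy : y ≤ l) :
    (n - y).choose (l - y) * (n + y - l).choose y =
      (n - y).choose (n - l) * (n - l + y).choose (n - l) := by
  rw [choose_symm_of_eq_add (show n - y = (l - y) + (n - l) by omega),
    choose_symm_of_eq_add (show n + y - l = y + (n - l) by omega),
    show n + y - l = n - l + y by omega]

end Nat

theorem stmt11 (n l : ℕ) (hl : l ≤ n) :
    (Finset.range (l + 1)).sup
        (fun y => Nat.choose (n - y) (l - y) * Nat.choose (n + y - l) y) =
      Nat.choose (n - l / 2) ((l + 1) / 2) * Nat.choose (n - (l + 1) / 2) (l / 2) := by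
  have hmid : l / 2 < l + 1 := Nat.lt_succ_of_le (l.div_le_self 2)
  rw [show n - (l + 1) / 2 = n + l / 2 - l by omega, show (l + 1) / 2 = l - l / 2 by omega]
  refine le_antisymm (Finset.sup_le fun y hy => ?_)
    (Finset.le_sup (f := fun y => (n - y).choose (l - y) * (n + y - l).choose y)
      (Finset.mem_range.2 hmid))
  have hy : y ≤ l := Nat.lt_succ_iff.1 (Finset.mem_range.1 hy)
  have hk : n - (n - l) = l := Nat.sub_sub_self hl
  rw [Nat.choose_sub_mul_choose_add_sub_eq hl hy,
    Nat.choose_sub_mul_choose_add_sub_eq hl (l.div_le_self 2)]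
  simpa only [hk] using Nat.choose_sub_mul_choose_add_le_middle n (n - l) (y := y) (by omega)
end

section
/- Define E(l) = C(n−⌊l/2⌋, ⌈l/2⌉) · C(n−⌈l/2⌉, ⌊l/2⌋) for integers 0 ≤ l ≤ n. Then E(l+1) ≤ E(l) if and only if (n−l)² ≤ ⌈(l+1)/2⌉ · (n − ⌊l/2⌋). Equivalently, for l even this is 5l² − 2(5n−1)l + 4n(n−1) ≤ 0, and for l odd this is 5l² − 10nl + 4n² − 2n − 1 ≤ 0. -/
/-- The maximum possible number of embeddings of a single LCS of length `l`
in two input sequences of length `n`: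
`E n l = C(n−⌊l/2⌋, ⌈l/2⌉) · C(n−⌈l/2⌉, ⌊l/2⌋)`. -/
def Efun (n l : ℕ) : ℕ :=
  Nat.choose (n - l / 2) ((l + 1) / 2) * Nat.choose (n - (l + 1) / 2) (l / 2)

private lemma cancel_iff {k x y : ℕ} (hk : 0 < k) : x * k ≤ y * k ↔ x ≤ y :=
  ⟨fun h => Nat.le_of_mul_le_mul_right h hk, fun h => Nat.mul_le_mul_right k h⟩

private lemma key_even {a m : ℕ} (hm : m + 1 ≤ a) :
    Nat.choose a (m+1) * Nat.choose (a-1) m ≤ Nat.choose a m * Nat.choose a m ↔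
    (a - m)^2 ≤ (m+1) * a := by
  set c := Nat.choose a m with hc'
  have hc : 0 < c := Nat.choose_pos (by omega)
  have h1 : Nat.choose a (m+1) * (m+1) = c * (a - m) := Nat.choose_succ_right_eq a m
  have h2 : Nat.choose (a-1) m * a = c * (a - m) := by
    have h := Nat.choose_mul_succ_eq (a-1) m
    rwa [show a - 1 + 1 = a from by omega] at h
  have e1 : Nat.choose a (m+1) * Nat.choose (a-1) m * ((m+1)*a)
      = (a-m)^2 * (c*c) := by
    calc Nat.choose a (m+1) * Nat.choose (a-1) m * ((m+1)*a)
        = (Nat.choose a (m+1) * (m+1)) * (Nat.choose (a-1) m * a) := by ring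
      _ = (c * (a-m)) * (c * (a-m)) := by rw [h1, h2]
      _ = (a-m)^2 * (c*c) := by ring
  have e2 : c * c * ((m+1)*a) = ((m+1)*a) * (c*c) := by ring
  rw [← cancel_iff (k := (m+1)*a) (Nat.mul_pos (Nat.succ_pos m) (by omega)),
      e1, e2, cancel_iff (Nat.mul_pos hc hc)]

private lemma key_odd {a m : ℕ} (hm : m + 2 ≤ a) :
    Nat.choose (a-1) (m+1) * Nat.choose (a-1) (m+1)
      ≤ Nat.choose a (m+1) * Nat.choose (a-1) m ↔
    (a - m - 1)^2 ≤ (m+1) * a := by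
  have hc : 0 < Nat.choose a (m+1) * Nat.choose (a-1) m :=
    Nat.mul_pos (Nat.choose_pos (by omega)) (Nat.choose_pos (by omega))
  have h1 : Nat.choose (a-1) (m+1) * (m+1) = Nat.choose (a-1) m * (a - m - 1) := by
    have h := Nat.choose_succ_right_eq (a-1) m
    rwa [show a - 1 - m = a - m - 1 from by omega] at h
  have h2 : Nat.choose (a-1) (m+1) * a = Nat.choose a (m+1) * (a - m - 1) := by
    have h := Nat.choose_mul_succ_eq (a-1) (m+1)
    rwa [show a - 1 + 1 = a from by omega, show a - (m+1) = a - m - 1 from by omega] at h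
  have e1 : Nat.choose (a-1) (m+1) * Nat.choose (a-1) (m+1) * ((m+1)*a)
      = (a-m-1)^2 * (Nat.choose a (m+1) * Nat.choose (a-1) m) := by
    calc Nat.choose (a-1) (m+1) * Nat.choose (a-1) (m+1) * ((m+1)*a)
        = (Nat.choose (a-1) (m+1) * (m+1)) * (Nat.choose (a-1) (m+1) * a) := by ring
      _ = (Nat.choose (a-1) m * (a-m-1)) * (Nat.choose a (m+1) * (a-m-1)) := by rw [h1, h2]
      _ = _ := by ring
  have e2 : Nat.choose a (m+1) * Nat.choose (a-1) m * ((m+1)*a)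
      = ((m+1)*a) * (Nat.choose a (m+1) * Nat.choose (a-1) m) := by ring
  rw [← cancel_iff (k := (m+1)*a) (Nat.mul_pos (Nat.succ_pos m) (by omega)),
      e1, e2, cancel_iff hc]

theorem stmt12 (n l : ℕ) (hln : l < n) :
    (Efun n (l + 1) ≤ Efun n l ↔ (n - l) ^ 2 ≤ ((l + 1 + 1) / 2) * (n - l / 2)) ∧
      (Even l → (Efun n (l + 1) ≤ Efun n l ↔
        5 * (l : ℤ) ^ 2 - 2 * (5 * (n : ℤ) - 1) * l + 4 * n * (n - 1) ≤ 0)) ∧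
      (Odd l → (Efun n (l + 1) ≤ Efun n l ↔
        5 * (l : ℤ) ^ 2 - 10 * (n : ℤ) * l + 4 * n ^ 2 - 2 * n - 1 ≤ 0)) := by
  obtain ⟨m, rfl | rfl⟩ : ∃ m, l = 2*m ∨ l = 2*m+1 := ⟨l/2, by omega⟩
  · -- even case
    have hE0 : Efun n (2*m) = Nat.choose (n-m) m * Nat.choose (n-m) m := by
      unfold Efun
      rw [show 2*m/2 = m from by omega, show (2*m+1)/2 = m from by omega]
    have hE1 : Efun n (2*m+1) = Nat.choose (n-m) (m+1) * Nat.choose (n-m-1) m := by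
      unfold Efun
      rw [show (2*m+1)/2 = m from by omega, show (2*m+1+1)/2 = m+1 from by omega,
          show n - (m+1) = n - m - 1 from by omega]
    have hiff : Efun n (2*m+1) ≤ Efun n (2*m) ↔ (n - m - m)^2 ≤ (m+1)*(n-m) := by
      rw [hE0, hE1]
      exact key_even (a := n - m) (by omega)
    refine ⟨?_, fun _ => ?_, fun hodd => by rw [Nat.odd_iff] at hodd; omega⟩
    · rw [hiff, show (2*m+1+1)/2 = m+1 from by omega, show 2*m/2 = m from by omega,
          show n - 2*m = n - m - m from by omega]
    · rw [hiff]
      zify [show m ≤ n - m from by omega, show m ≤ n from by omega]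
      constructor <;> intro h <;> nlinarith [h]
  · -- odd case
    have hE1 : Efun n (2*m+1) = Nat.choose (n-m) (m+1) * Nat.choose (n-m-1) m := by
      unfold Efun
      rw [show (2*m+1)/2 = m from by omega, show (2*m+1+1)/2 = m+1 from by omega,
          show n - (m+1) = n - m - 1 from by omega]
    have hE2 : Efun n (2*m+1+1) = Nat.choose (n-m-1) (m+1) * Nat.choose (n-m-1) (m+1) := by
      unfold Efun
      rw [show (2*m+1+1)/2 = m+1 from by omega, show (2*m+1+1+1)/2 = m+1 from by omega,
          show n - (m+1) = n - m - 1 from by omega]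
    have hiff : Efun n (2*m+1+1) ≤ Efun n (2*m+1) ↔ (n - m - m - 1)^2 ≤ (m+1)*(n-m) := by
      rw [hE1, hE2]
      exact key_odd (a := n - m) (by omega)
    refine ⟨?_, fun heven => by rw [Nat.even_iff] at heven; omega, fun _ => ?_⟩
    · rw [hiff, show (2*m+1+1+1)/2 = m+1 from by omega, show (2*m+1)/2 = m from by omega,
          show n - (2*m+1) = n - m - m - 1 from by omega]
    · rw [hiff]
      zify [show 1 ≤ n - m - m from by omega, show m ≤ n - m from by omega,
            show m ≤ n from by omega]
      constructor <;> intro h <;> nlinarith [h]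
end

section
/- For each of the quadratics q_even(l) = 5l² − 2(5n−1)l + 4n(n−1) and q_odd(l) = 5l² − 10nl + 4n² − 2n − 1 (n a positive integer), the two real roots r_1 < r_2 satisfy −1 < r_1 < n and n < r_2. Explicitly, the smaller roots are σ = (5n − 1 − √(5(n+1)² − 4))/5 and τ = (5n − √(5(n+1)²))/5 respectively, and σ < τ < σ + 1/5. -/
set_option maxHeartbeats 1000000 in

theorem stmt13 (n : ℕ) (hn : 0 < n) :
    let σ : ℝ := (5 * n - 1 - Real.sqrt (5 * ((n : ℝ) + 1) ^ 2 - 4)) / 5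
    let σ₂ : ℝ := (5 * n - 1 + Real.sqrt (5 * ((n : ℝ) + 1) ^ 2 - 4)) / 5
    let τ : ℝ := (5 * n - Real.sqrt (5 * ((n : ℝ) + 1) ^ 2)) / 5
    let τ₂ : ℝ := (5 * n + Real.sqrt (5 * ((n : ℝ) + 1) ^ 2)) / 5
    (5 * σ ^ 2 - 2 * (5 * n - 1) * σ + 4 * n * (n - 1) = 0) ∧
      (5 * σ₂ ^ 2 - 2 * (5 * n - 1) * σ₂ + 4 * n * (n - 1) = 0) ∧
      (5 * τ ^ 2 - 10 * n * τ + 4 * (n : ℝ) ^ 2 - 2 * n - 1 = 0) ∧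
      (5 * τ₂ ^ 2 - 10 * n * τ₂ + 4 * (n : ℝ) ^ 2 - 2 * n - 1 = 0) ∧
      (-1 < σ ∧ σ < n ∧ (n : ℝ) < σ₂) ∧
      (-1 < τ ∧ τ < n ∧ (n : ℝ) < τ₂) ∧
      (σ < τ ∧ τ < σ + 1 / 5) := by
  intro σ σ₂ τ τ₂
  have hN : (1:ℝ) ≤ n := by exact_mod_cast hn
  have hA : (0:ℝ) ≤ 5 * ((n : ℝ) + 1) ^ 2 - 4 := by nlinarith
  have hB : (0:ℝ) ≤ 5 * ((n : ℝ) + 1) ^ 2 := by positivity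
  have hs : (Real.sqrt (5 * ((n : ℝ) + 1) ^ 2 - 4)) ^ 2 = 5 * ((n : ℝ) + 1) ^ 2 - 4 :=
    Real.sq_sqrt hA
  have ht : (Real.sqrt (5 * ((n : ℝ) + 1) ^ 2)) ^ 2 = 5 * ((n : ℝ) + 1) ^ 2 :=
    Real.sq_sqrt hB
  have hs0 : 0 ≤ Real.sqrt (5 * ((n : ℝ) + 1) ^ 2 - 4) := Real.sqrt_nonneg _
  have ht0 : 0 ≤ Real.sqrt (5 * ((n : ℝ) + 1) ^ 2) := Real.sqrt_nonneg _
  have eσ : σ = (5 * n - 1 - Real.sqrt (5 * ((n : ℝ) + 1) ^ 2 - 4)) / 5 := rfl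
  have eσ₂ : σ₂ = (5 * n - 1 + Real.sqrt (5 * ((n : ℝ) + 1) ^ 2 - 4)) / 5 := rfl
  have eτ : τ = (5 * n - Real.sqrt (5 * ((n : ℝ) + 1) ^ 2)) / 5 := rfl
  have eτ₂ : τ₂ = (5 * n + Real.sqrt (5 * ((n : ℝ) + 1) ^ 2)) / 5 := rfl
  clear_value σ σ₂ τ τ₂
  subst eσ eσ₂ eτ eτ₂
  set s : ℝ := Real.sqrt (5 * ((n : ℝ) + 1) ^ 2 - 4) with hsdef
  set t : ℝ := Real.sqrt (5 * ((n : ℝ) + 1) ^ 2) with htdef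
  clear_value s t
  have h4 : 4 ≤ s := by nlinarith [hs, hs0, hN]
  have hsup : s < 5 * (n:ℝ) + 4 := by nlinarith [hs, hs0, hN]
  have hsub : t < 5 * ((n:ℝ) + 1) := by nlinarith [ht, ht0, hN]
  have htpos : 1 ≤ t := by nlinarith [ht, ht0, hN]
  have hst : s < t := by nlinarith [hs, ht, hs0, ht0]
  have hst2 : t < s + 1 := by nlinarith [hs, ht, h4, ht0]
  refine ⟨by nlinarith [hs], by nlinarith [hs], by nlinarith [ht], by nlinarith [ht],
    ⟨by linarith, by linarith, by linarith⟩,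
    ⟨by linarith, by linarith, by linarith⟩,
    by linarith, by linarith⟩
end

section
/- The limit as n → ∞ of C(⌊(1/2)(1 + 1/√5)(n+1)⌋, ⌈(5n−1−√(5(n+1)²−4))/10⌉) · C(⌊(5n+1+√(5(n+1)²−4))/10⌋, ⌊(1/2)(1 − 1/√5)(n+1)⌋) · n / φ^(2n) equals φ²√5/(2π), where φ = (1+√5)/2. In particular, the maximum number of embeddings of a single LCS in two sequences of length n grows as (φ²)^n / n times the constant φ²√5/(2π) ≈ 0.932, and φ² ≈ 2.62. -/
/-!
Write `a = ⌊α (n+1)⌋` and `c` for the other floor, and put `k = a + c - n`, `p = n - a`,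
`q = n - c`; the two lower indices are exactly `q` and `p`, so the product is
`C(k+q, q) C(k+p, p) = (k+q)! (k+p)! / (q! p! k!²)` with `k + p + q = n`. Both floors stay within
`O(1)` of `α n`, where `α = φ / √5`, hence `k, p, q` stay within `O(1)` of `κ n, β n, β n` with
`κ = 1 / √5`, `β = 1 / (φ √5)`.

Stirling's formula splits the factorial ratio into a square-root prefactor, which times `n` tends
to `φ² √5 / (2π)`, and a power part. Because `α = φ κ`, `β = κ / φ` and `α - β = κ`, the power
part divided by `φ^(2n)` is exactly `exp` of a signed sum of terms `y · klFun (x / y)`, one for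
each of `k+q, k+p, p, q, k` against its linear approximation `y`. As
`0 ≤ y · klFun (x / y) ≤ (x - y)² / y`, each term is `O(1/n)`, so the exponent tends to `0`.
-/

open Filter Real

namespace LcsEmbeddings

open Asymptotics Topology InformationTheory
open scoped goldenRatio

noncomputable section

def κ : ℝ := (√5)⁻¹
def α : ℝ := φ * κ
def β : ℝ := φ⁻¹ * κ

lemma κ_pos : 0 < κ := by unfold κ; positivity
lemma α_pos : 0 < α := mul_pos goldenRatio_pos κ_pos
lemma β_pos : 0 < β := mul_pos (inv_pos.2 goldenRatio_pos) κ_pos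

lemma α_add_β : α + β = 1 := by
  rw [α, β, ← add_mul, inv_goldenRatio, ← sub_eq_add_neg, goldenRatio_sub_goldenConj, κ,
    mul_inv_cancel₀ (by positivity)]

lemma α_sub_β : α - β = κ := by
  rw [α, β, ← sub_mul, inv_goldenRatio, sub_neg_eq_add, goldenRatio_add_goldenConj, one_mul]

lemma α_div_β : α / β = φ ^ 2 := by
  rw [α, β, mul_div_mul_right _ _ κ_pos.ne', div_inv_eq_mul, sq]

lemma κ_eq : κ = 2 * α - 1 := by linarith [α_add_β, α_sub_β]

lemma α_eq : α = (1 + 1 / √5) / 2 := by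
  rw [one_div, ← κ]; linarith [κ_eq]

lemma β_eq : β = (1 - 1 / √5) / 2 := by
  rw [one_div, ← κ]; linarith [α_add_β, α_sub_β]

lemma irrational_α_mul_succ (n : ℕ) : Irrational (α * (n + 1)) := by
  have hκ : Irrational κ := by
    rw [κ]; exact (by simpa using Nat.prime_five.irrational_sqrt : Irrational √5).inv
  convert ((hκ.mul_natCast n.succ_ne_zero).add_natCast (n + 1)).div_natCast two_ne_zero using 1
  rw [κ_eq]; push_cast; ring

lemma two_lt_sqrt_five : 2 < √5 := by rw [lt_sqrt (by norm_num)]; norm_num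

lemma sqrt_five_lt : √5 < 9 / 4 := by rw [sqrt_lt' (by norm_num)]; norm_num

lemma klFun_le_sq {t : ℝ} (ht : 0 ≤ t) : klFun t ≤ (t - 1) ^ 2 := by
  rcases ht.eq_or_lt with rfl | ht
  · simp [klFun_zero]
  have := mul_le_mul_of_nonneg_left (log_le_sub_one_of_pos ht) ht.le
  rw [klFun_apply]; nlinarith

lemma mul_klFun_div_le {x y : ℝ} (hx : 0 ≤ x) (hy : 0 < y) :
    y * klFun (x / y) ≤ (x - y) ^ 2 / y := by
  calc y * klFun (x / y) ≤ y * (x / y - 1) ^ 2 := by gcongr; exact klFun_le_sq (by positivity)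
    _ = (x - y) ^ 2 / y := by field_simp

lemma mul_klFun_div {x y : ℝ} (hx : x ≠ 0) (hy : y ≠ 0) :
    y * klFun (x / y) = x * (log x - log y) + y - x := by
  rw [klFun_apply, log_div hx hy]; field_simp

lemma div_exp_one_pow {x : ℝ} (hx : 0 < x) (m : ℕ) : (x / exp 1) ^ m = exp (m * (log x - 1)) := by
  rw [← rpow_natCast, rpow_def_of_pos (by positivity), log_div hx.ne' (exp_pos 1).ne', log_exp,
    mul_comm]

lemma natFloor_natCast_sub {m : ℕ} {x : ℝ} (hx₀ : 0 ≤ x) (hxm : x ≤ m) :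
    ⌊(m : ℝ) - x⌋₊ = m - ⌈x⌉₊ := by
  have hceil : ⌈x⌉₊ ≤ m := Nat.ceil_le.2 hxm
  rw [Nat.floor_eq_iff (by linarith), Nat.cast_sub hceil]
  exact ⟨by linarith [Nat.le_ceil x], by linarith [Nat.ceil_lt_add_one hx₀]⟩

lemma _root_.Irrational.natCeil_eq_natFloor_add_one {x : ℝ} (hx : Irrational x) (hx₀ : 0 ≤ x) :
    ⌈x⌉₊ = ⌊x⌋₊ + 1 := by
  rw [Nat.ceil_eq_iff (Nat.succ_ne_zero _), Nat.succ_sub_one]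
  push_cast
  exact ⟨(Nat.floor_le hx₀).lt_of_ne (hx.ne_nat _).symm, (Nat.lt_floor_add_one x).le⟩

lemma abs_sqrt_sq_sub_four_sub_le {t : ℝ} (ht : 2 ≤ t) : |√(t ^ 2 - 4) - t| ≤ 2 := by
  have hle : √(t ^ 2 - 4) ≤ t := by
    rw [sqrt_le_left (by linarith)]; linarith
  have hge : t - 2 ≤ √(t ^ 2 - 4) := by
    rw [le_sqrt (by linarith) (by nlinarith)]; nlinarith
  rw [abs_le]; constructor <;> linarith

section LinearGrowth

variable {x : ℕ → ℝ} {c : ℝ}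

lemma tendsto_div_natCast_of_isBigO_one (hx : (fun n => x n - c * n) =O[atTop] fun _ => (1 : ℝ)) :
    Tendsto (fun n => x n / n) atTop (𝓝 c) := by
  have hinv : Tendsto (fun n : ℕ => 1 * (n : ℝ)⁻¹) atTop (𝓝 0) := by
    simpa [Function.comp_def] using tendsto_inv_atTop_zero.comp tendsto_natCast_atTop_atTop
  have h0 := ((hx.mul (isBigO_refl (fun n : ℕ => (n : ℝ)⁻¹) atTop)).trans_tendsto hinv).const_add c
  rw [add_zero] at h0
  refine h0.congr' ?_
  filter_upwards [eventually_ne_atTop 0] with n hn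
  field_simp
  ring

lemma tendsto_atTop_of_isBigO_one {m : ℕ → ℕ} (hc : 0 < c)
    (hm : (fun n => (m n : ℝ) - c * n) =O[atTop] fun _ => (1 : ℝ)) : Tendsto m atTop atTop := by
  rw [← tendsto_natCast_atTop_iff (R := ℝ)]
  refine ((tendsto_div_natCast_of_isBigO_one hm).pos_mul_atTop hc
    tendsto_natCast_atTop_atTop).congr' ?_
  filter_upwards [eventually_ne_atTop 0] with n hn
  field_simp

lemma tendsto_mul_klFun_div_of_isBigO_one (hc : 0 < c) (hx₀ : ∀ n, 0 ≤ x n)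
    (hx : (fun n => x n - c * n) =O[atTop] fun _ => (1 : ℝ)) :
    Tendsto (fun n => c * n * klFun (x n / (c * n))) atTop (𝓝 0) := by
  have hinv : Tendsto (fun n : ℕ => 1 * 1 * (c * n)⁻¹) atTop (𝓝 0) := by
    simpa [Function.comp_def] using
      tendsto_inv_atTop_zero.comp (tendsto_natCast_atTop_atTop.const_mul_atTop hc)
  have hsq := ((hx.mul hx).mul (isBigO_refl (fun n : ℕ => (c * n)⁻¹) atTop)).trans_tendsto hinv
  refine tendsto_of_tendsto_of_tendsto_of_le_of_le' tendsto_const_nhds hsq ?_ ?_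
  · filter_upwards [eventually_ne_atTop 0] with n hn
    have hcn : 0 < c * n := mul_pos hc (by positivity)
    exact mul_nonneg hcn.le (klFun_nonneg (div_nonneg (hx₀ n) hcn.le))
  · filter_upwards [eventually_ne_atTop 0] with n hn
    calc c * n * klFun (x n / (c * n)) ≤ (x n - c * n) ^ 2 / (c * n) :=
          mul_klFun_div_le (hx₀ n) (mul_pos hc (by positivity))
      _ = (x n - c * n) * (x n - c * n) * (c * n)⁻¹ := by ring

lemma isBigO_one_natFloor_sub (hx₀ : ∀ n, 0 ≤ x n)
    (hx : (fun n => x n - c * n) =O[atTop] fun _ => (1 : ℝ)) :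
    (fun n => (⌊x n⌋₊ : ℝ) - c * n) =O[atTop] fun _ => (1 : ℝ) := by
  have hfloor : (fun n => (⌊x n⌋₊ : ℝ) - x n) =O[atTop] fun _ => (1 : ℝ) :=
    IsBigO.of_bound 1 (Eventually.of_forall fun n => by
      simpa using Nat.abs_floor_sub_le (hx₀ n))
  exact (hfloor.add hx).congr_left fun n => by ring

end LinearGrowth

lemma cast_choose_mul_choose (k p q : ℕ) :
    (((k + q).choose q * (k + p).choose p : ℕ) : ℝ) =
      (k + q).factorial * (k + p).factorial / (q.factorial * p.factorial * k.factorial ^ 2) := by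
  rw [Nat.cast_mul, ← Nat.choose_symm_add, ← Nat.choose_symm_add, Nat.cast_add_choose,
    Nat.cast_add_choose]
  ring

def stirlingApprox (m : ℕ) : ℝ := √(2 * m * π) * (m / exp 1) ^ m

lemma factorial_comp_isEquivalent {m : ℕ → ℕ} (hm : Tendsto m atTop atTop) :
    (fun n => ((m n).factorial : ℝ)) ~[atTop] fun n => stirlingApprox (m n) :=
  Stirling.factorial_isEquivalent_stirling.comp_tendsto hm

def stirlingPrefactor (x y z : ℝ) : ℝ := √((x + z) * (x + y) / (z * y)) / (2 * π * x)

def stirlingExponent (k p q n : ℕ) : ℝ :=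
  α * n * klFun ((k + q) / (α * n)) + α * n * klFun ((k + p) / (α * n))
    - β * n * klFun (p / (β * n)) - β * n * klFun (q / (β * n)) - 2 * (κ * n * klFun (k / (κ * n)))

lemma sqrt_ratio_mul_eq_stirlingPrefactor {k p q : ℕ} (hk : k ≠ 0) (hp : p ≠ 0) (hq : q ≠ 0) :
    √(2 * ↑(k + q) * π) * √(2 * ↑(k + p) * π) /
        (√(2 * q * π) * √(2 * p * π) * √(2 * k * π) ^ 2) * ↑(k + p + q) =
      stirlingPrefactor (k / ↑(k + p + q)) (p / ↑(k + p + q)) (q / ↑(k + p + q)) := by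
  rw [stirlingPrefactor, ← sqrt_mul (by positivity), ← sqrt_mul (by positivity),
    sq_sqrt (by positivity)]
  have hratio :
      ((k : ℝ) / ↑(k + p + q) + q / ↑(k + p + q)) * (k / ↑(k + p + q) + p / ↑(k + p + q)) /
        (q / ↑(k + p + q) * (p / ↑(k + p + q))) =
      2 * ↑(k + q) * π * (2 * ↑(k + p) * π) / (2 * q * π * (2 * p * π)) := by
    push_cast; field_simp
  rw [hratio, sqrt_div (by positivity)]
  field_simp

lemma pow_ratio_div_eq_exp_stirlingExponent {k p q : ℕ} (hk : k ≠ 0) (hp : p ≠ 0) (hq : q ≠ 0) :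
    (↑(k + q) / exp 1) ^ (k + q) * (↑(k + p) / exp 1) ^ (k + p) /
        ((q / exp 1) ^ q * (p / exp 1) ^ p * ((k / exp 1) ^ k) ^ 2) / φ ^ (2 * (k + p + q)) =
      exp (stirlingExponent k p q (k + p + q)) := by
  have hk' : (0 : ℝ) < k := by positivity
  have hp' : (0 : ℝ) < p := by positivity
  have hq' : (0 : ℝ) < q := by positivity
  rw [div_exp_one_pow (by positivity), div_exp_one_pow (by positivity), div_exp_one_pow hq',
    div_exp_one_pow hp', div_exp_one_pow hk', ← exp_nat_mul, ← rpow_natCast,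
    rpow_def_of_pos goldenRatio_pos, ← exp_add, ← exp_add, ← exp_add, ← exp_sub, ← exp_sub]
  congr 1
  have hlog : ∀ c : ℝ, 0 < c → log (c * ↑(k + p + q)) = log c + log (k + p + q) := fun c hc => by
    rw [log_mul hc.ne' (by positivity)]; push_cast; ring
  have hα : log α = log φ + log κ := log_mul goldenRatio_ne_zero κ_pos.ne'
  have hβ : log β = -log φ + log κ := by
    rw [β, log_mul (inv_ne_zero goldenRatio_ne_zero) κ_pos.ne', log_inv]
  have hαn : α * ↑(k + p + q) ≠ 0 := (mul_pos α_pos (by positivity)).ne'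
  have hβn : β * ↑(k + p + q) ≠ 0 := (mul_pos β_pos (by positivity)).ne'
  have hκn : κ * ↑(k + p + q) ≠ 0 := (mul_pos κ_pos (by positivity)).ne'
  rw [stirlingExponent, mul_klFun_div (by positivity) hαn, mul_klFun_div (by positivity) hαn,
    mul_klFun_div hp'.ne' hβn, mul_klFun_div hq'.ne' hβn, mul_klFun_div hk'.ne' hκn,
    hlog α α_pos, hlog β β_pos, hlog κ κ_pos, hα, hβ]
  push_cast
  linear_combination (-2 * ((k : ℝ) + p + q)) * α_sub_β

lemma stirlingApprox_ratio_eq {k p q n : ℕ} (hk : k ≠ 0) (hp : p ≠ 0) (hq : q ≠ 0)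
    (hn : k + p + q = n) :
    stirlingApprox (k + q) * stirlingApprox (k + p) /
        (stirlingApprox q * stirlingApprox p * stirlingApprox k ^ 2) * n / φ ^ (2 * n) =
      stirlingPrefactor (k / n) (p / n) (q / n) * exp (stirlingExponent k p q n) := by
  subst hn
  unfold stirlingApprox
  rw [← sqrt_ratio_mul_eq_stirlingPrefactor hk hp hq,
    ← pow_ratio_div_eq_exp_stirlingExponent hk hp hq]
  ring

lemma stirlingPrefactor_κ_β_β : stirlingPrefactor κ β β = φ ^ 2 * √5 / (2 * π) := by
  have hαβ : (κ + β) * (κ + β) / (β * β) = (α / β) ^ 2 := by rw [← α_sub_β]; ring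
  rw [stirlingPrefactor, hαβ, sqrt_sq (div_pos α_pos β_pos).le, α_div_β, κ]
  field_simp

section Asymptotics

variable {k p q : ℕ → ℕ}

lemma tendsto_stirlingPrefactor
    (hk : Tendsto (fun n => (k n : ℝ) / n) atTop (𝓝 κ))
    (hp : Tendsto (fun n => (p n : ℝ) / n) atTop (𝓝 β))
    (hq : Tendsto (fun n => (q n : ℝ) / n) atTop (𝓝 β)) :
    Tendsto (fun n => stirlingPrefactor (k n / n) (p n / n) (q n / n)) atTop
      (𝓝 (φ ^ 2 * √5 / (2 * π))) := by
  rw [← stirlingPrefactor_κ_β_β]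
  exact (((hk.add hq).mul (hk.add hp)).div (hq.mul hp) (mul_pos β_pos β_pos).ne').sqrt.div
    (tendsto_const_nhds.mul hk) (mul_pos (by positivity) κ_pos).ne'

lemma tendsto_stirlingExponent
    (hk : (fun n => (k n : ℝ) - κ * n) =O[atTop] fun _ => (1 : ℝ))
    (hp : (fun n => (p n : ℝ) - β * n) =O[atTop] fun _ => (1 : ℝ))
    (hq : (fun n => (q n : ℝ) - β * n) =O[atTop] fun _ => (1 : ℝ)) :
    Tendsto (fun n => stirlingExponent (k n) (p n) (q n) n) atTop (𝓝 0) := by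
  have hkq : (fun n => ((k n : ℝ) + q n) - α * n) =O[atTop] fun _ => (1 : ℝ) :=
    (hk.add hq).congr_left fun n => by rw [← α_sub_β]; ring
  have hkp : (fun n => ((k n : ℝ) + p n) - α * n) =O[atTop] fun _ => (1 : ℝ) :=
    (hk.add hp).congr_left fun n => by rw [← α_sub_β]; ring
  have h := ((((tendsto_mul_klFun_div_of_isBigO_one α_pos (fun n => by positivity) hkq).add
    (tendsto_mul_klFun_div_of_isBigO_one α_pos (fun n => by positivity) hkp)).sub
    (tendsto_mul_klFun_div_of_isBigO_one β_pos (fun n => by positivity) hp)).sub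
    (tendsto_mul_klFun_div_of_isBigO_one β_pos (fun n => by positivity) hq)).sub
    ((tendsto_mul_klFun_div_of_isBigO_one κ_pos (fun n => by positivity) hk).const_mul 2)
  rwa [show (0 : ℝ) + 0 - 0 - 0 - 2 * 0 = 0 by ring] at h

lemma factorial_ratio_isEquivalent (hk : Tendsto k atTop atTop) (hp : Tendsto p atTop atTop)
    (hq : Tendsto q atTop atTop) :
    (fun n => ((k n + q n).factorial * (k n + p n).factorial /
      ((q n).factorial * (p n).factorial * (k n).factorial ^ 2) : ℝ)) ~[atTop]
      fun n => stirlingApprox (k n + q n) * stirlingApprox (k n + p n) /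
        (stirlingApprox (q n) * stirlingApprox (p n) * stirlingApprox (k n) ^ 2) :=
  ((factorial_comp_isEquivalent (tendsto_atTop_mono (fun _ => Nat.le_add_right _ _) hk)).mul
    (factorial_comp_isEquivalent (tendsto_atTop_mono (fun _ => Nat.le_add_right _ _) hk))).div
    (((factorial_comp_isEquivalent hq).mul (factorial_comp_isEquivalent hp)).mul
      ((factorial_comp_isEquivalent hk).pow 2))

theorem tendsto_choose_mul_choose
    (hk : (fun n => (k n : ℝ) - κ * n) =O[atTop] fun _ => (1 : ℝ))
    (hp : (fun n => (p n : ℝ) - β * n) =O[atTop] fun _ => (1 : ℝ))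
    (hq : (fun n => (q n : ℝ) - β * n) =O[atTop] fun _ => (1 : ℝ))
    (hsum : ∀ᶠ n in atTop, k n + p n + q n = n) :
    Tendsto (fun n => (((k n + q n).choose (q n) * (k n + p n).choose (p n) : ℕ) : ℝ) * n /
      φ ^ (2 * n)) atTop (𝓝 (φ ^ 2 * √5 / (2 * π))) := by
  have hk_top := tendsto_atTop_of_isBigO_one κ_pos hk
  have hp_top := tendsto_atTop_of_isBigO_one β_pos hp
  have hq_top := tendsto_atTop_of_isBigO_one β_pos hq
  have hlim := (tendsto_stirlingPrefactor (tendsto_div_natCast_of_isBigO_one hk)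
    (tendsto_div_natCast_of_isBigO_one hp) (tendsto_div_natCast_of_isBigO_one hq)).mul
    ((continuous_exp.tendsto 0).comp (tendsto_stirlingExponent hk hp hq))
  rw [Function.comp_def, exp_zero, mul_one] at hlim
  have hequiv := (factorial_ratio_isEquivalent hk_top hp_top hq_top).mul
    (IsEquivalent.refl (u := fun n : ℕ => (n : ℝ) / φ ^ (2 * n)))
  refine (hequiv.symm.tendsto_nhds (hlim.congr' ?_)).congr fun n => ?_
  · filter_upwards [hsum, hk_top.eventually_ne_atTop 0, hp_top.eventually_ne_atTop 0,
      hq_top.eventually_ne_atTop 0] with n hn hk0 hp0 hq0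
    rw [Pi.mul_apply, ← mul_div_assoc, stirlingApprox_ratio_eq hk0 hp0 hq0 hn]
  · rw [Pi.mul_apply, cast_choose_mul_choose]; ring

end Asymptotics

theorem tendsto_choose_sub_mul_choose_sub {a c : ℕ → ℕ}
    (ha : (fun n => (a n : ℝ) - α * n) =O[atTop] fun _ => (1 : ℝ))
    (hc : (fun n => (c n : ℝ) - α * n) =O[atTop] fun _ => (1 : ℝ)) :
    Tendsto (fun n => (((a n).choose (n - c n) * (c n).choose (n - a n) : ℕ) : ℝ) * n /
      φ ^ (2 * n)) atTop (𝓝 (φ ^ 2 * √5 / (2 * π))) := by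
  have hα_lt : α < 1 := by linarith [α_add_β, β_pos]
  have hα_gt : 1 < α + α := by linarith [κ_eq, κ_pos]
  have hrange : ∀ᶠ n in atTop, a n ≤ n ∧ c n ≤ n ∧ n ≤ a n + c n := by
    have ha' := tendsto_div_natCast_of_isBigO_one ha
    have hc' := tendsto_div_natCast_of_isBigO_one hc
    filter_upwards [ha'.eventually (gt_mem_nhds hα_lt), hc'.eventually (gt_mem_nhds hα_lt),
      (ha'.add hc').eventually (lt_mem_nhds hα_gt), eventually_gt_atTop 0] with n h1 h2 h3 hn
    have hn' : (0 : ℝ) < n := by positivity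
    rw [div_lt_one hn'] at h1 h2
    rw [← add_div, one_lt_div hn'] at h3
    exact ⟨by exact_mod_cast h1.le, by exact_mod_cast h2.le, by exact_mod_cast h3.le⟩
  have hk : (fun n => ((a n + c n - n : ℕ) : ℝ) - κ * n) =O[atTop] fun _ => (1 : ℝ) := by
    refine (ha.add hc).congr' ?_ EventuallyEq.rfl
    filter_upwards [hrange] with n ⟨_, _, h⟩
    rw [Nat.cast_sub h, κ_eq]; push_cast; ring
  have hp : (fun n => ((n - a n : ℕ) : ℝ) - β * n) =O[atTop] fun _ => (1 : ℝ) := by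
    refine ha.neg_left.congr' ?_ EventuallyEq.rfl
    filter_upwards [hrange] with n ⟨h, _, _⟩
    rw [Nat.cast_sub h]; linear_combination (n : ℝ) * α_add_β
  have hq : (fun n => ((n - c n : ℕ) : ℝ) - β * n) =O[atTop] fun _ => (1 : ℝ) := by
    refine hc.neg_left.congr' ?_ EventuallyEq.rfl
    filter_upwards [hrange] with n ⟨_, h, _⟩
    rw [Nat.cast_sub h]; linear_combination (n : ℝ) * α_add_β
  refine (tendsto_choose_mul_choose hk hp hq ?_).congr' ?_
  · filter_upwards [hrange] with n ⟨h1, h2, h3⟩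
    omega
  · filter_upwards [hrange] with n ⟨h1, h2, h3⟩
    rw [show a n + c n - n + (n - c n) = a n by omega,
      show a n + c n - n + (n - a n) = c n by omega]

lemma abs_sqrt_five_mul_sq_sub_four_sub_le (n : ℕ) :
    |√(5 * ((n : ℝ) + 1) ^ 2 - 4) - √5 * (n + 1)| ≤ 2 := by
  have h := abs_sqrt_sq_sub_four_sub_le (t := √5 * (n + 1)) (by nlinarith [two_lt_sqrt_five])
  rwa [mul_pow, sq_sqrt (by norm_num)] at h

lemma isBigO_natFloor_α_mul_succ :
    (fun n : ℕ => (⌊(1 / 2 : ℝ) * (1 + 1 / √5) * ((n : ℝ) + 1)⌋₊ : ℝ) - α * n) =O[atTop]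
      fun _ => (1 : ℝ) := by
  have hα : (1 / 2 : ℝ) * (1 + 1 / √5) = α := by rw [α_eq]; ring
  simp_rw [hα]
  exact isBigO_one_natFloor_sub (fun n => mul_nonneg α_pos.le (by positivity))
    ((isBigO_const_one ℝ α atTop).congr_left fun n => by ring)

lemma isBigO_natFloor_sqrt :
    (fun n : ℕ => (⌊(5 * (n : ℝ) + 1 + √(5 * ((n : ℝ) + 1) ^ 2 - 4)) / 10⌋₊ : ℝ) - α * n) =O[atTop]
      fun _ => (1 : ℝ) := by
  refine isBigO_one_natFloor_sub (fun n => by positivity)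
    (IsBigO.of_bound 1 (Eventually.of_forall fun n => ?_))
  have hα : α = 1 / 2 + √5 / 10 := by
    rw [α_eq]; field_simp
    linear_combination -2 * mul_self_sqrt (show (0 : ℝ) ≤ 5 by norm_num)
  have hs := abs_le.1 (abs_sqrt_five_mul_sq_sub_four_sub_le n)
  rw [norm_one, mul_one, norm_eq_abs, abs_le, hα]
  constructor <;> linarith [two_lt_sqrt_five, sqrt_five_lt]

-- `β (n + 1) = (n + 1) - α (n + 1)`, and `α (n + 1)` is never an integer.
lemma natFloor_β_mul_succ (n : ℕ) :
    ⌊(1 / 2 : ℝ) * (1 - 1 / √5) * ((n : ℝ) + 1)⌋₊ =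
      n - ⌊(1 / 2 : ℝ) * (1 + 1 / √5) * ((n : ℝ) + 1)⌋₊ := by
  have hα : (1 / 2 : ℝ) * (1 + 1 / √5) = α := by rw [α_eq]; ring
  have hβ : (1 / 2 : ℝ) * (1 - 1 / √5) * ((n : ℝ) + 1) = ((n + 1 : ℕ) : ℝ) - α * (n + 1) := by
    push_cast; linear_combination ((n : ℝ) + 1) * (β_eq.symm.trans (eq_sub_of_add_eq' α_add_β))
  have hαn : 0 ≤ α * ((n : ℝ) + 1) := mul_nonneg α_pos.le (by positivity)
  rw [hα, hβ, natFloor_natCast_sub hαn (by push_cast; nlinarith [α_add_β, β_pos]),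
    (irrational_α_mul_succ n).natCeil_eq_natFloor_add_one hαn, Nat.add_sub_add_right]

lemma natCeil_sqrt_eq_sub_natFloor {n : ℕ} (hn : 2 ≤ n) :
    ⌈(5 * (n : ℝ) - 1 - √(5 * ((n : ℝ) + 1) ^ 2 - 4)) / 10⌉₊ =
      n - ⌊(5 * (n : ℝ) + 1 + √(5 * ((n : ℝ) + 1) ^ 2 - 4)) / 10⌋₊ := by
  set x := (5 * (n : ℝ) - 1 - √(5 * ((n : ℝ) + 1) ^ 2 - 4)) / 10 with hx
  have hs := abs_le.1 (abs_sqrt_five_mul_sq_sub_four_sub_le n)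
  have hn' : (2 : ℝ) ≤ n := by exact_mod_cast hn
  have hx₀ : 0 ≤ x := by rw [hx]; nlinarith [sqrt_five_lt]
  have hxn : x ≤ n := by
    have := sqrt_nonneg (5 * ((n : ℝ) + 1) ^ 2 - 4)
    rw [hx]; linarith
  rw [show (5 * (n : ℝ) + 1 + √(5 * ((n : ℝ) + 1) ^ 2 - 4)) / 10 = n - x by ring,
    natFloor_natCast_sub hx₀ hxn]
  have := Nat.ceil_le.2 hxn
  omega

end

end LcsEmbeddings

theorem stmt15 :
    let φ : ℝ := (1 + Real.sqrt 5) / 2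
    Filter.Tendsto
      (fun n : ℕ =>
        ((Nat.choose ⌊(1 / 2 : ℝ) * (1 + 1 / Real.sqrt 5) * ((n : ℝ) + 1)⌋₊
              ⌈(5 * (n : ℝ) - 1 - Real.sqrt (5 * ((n : ℝ) + 1) ^ 2 - 4)) / 10⌉₊ *
            Nat.choose ⌊(5 * (n : ℝ) + 1 + Real.sqrt (5 * ((n : ℝ) + 1) ^ 2 - 4)) / 10⌋₊
              ⌊(1 / 2 : ℝ) * (1 - 1 / Real.sqrt 5) * ((n : ℝ) + 1)⌋₊ : ℝ) *
          (n : ℝ)) / φ ^ (2 * n))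
      Filter.atTop (nhds (φ ^ 2 * Real.sqrt 5 / (2 * Real.pi))) := by
  intro φ
  refine (LcsEmbeddings.tendsto_choose_sub_mul_choose_sub
    LcsEmbeddings.isBigO_natFloor_α_mul_succ LcsEmbeddings.isBigO_natFloor_sqrt).congr' ?_
  filter_upwards [eventually_ge_atTop 2] with n hn
  rw [LcsEmbeddings.natCeil_sqrt_eq_sub_natFloor hn, LcsEmbeddings.natFloor_β_mul_succ,
    Nat.cast_mul]
end

section
/- The limit as t → ∞ of C(⌊(5t+3+√(5(t+1)²+4))/10⌋, ⌈(5t−3−√(5(t+1)²+4))/10⌉) · √t / φ^t equals φ·√(√5/(2π)), where φ = (1+√5)/2. Equivalently, the maximum over l of C(t−l, l) is asymptotically ≈ 0.965 · φ^t / √t. -/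
/-!
Put `q = l` and `r = t - 2l`, so that `C(t - l, l) = C(q + r, q)` and `t = 2q + r`. Stirling's
formula turns `C(q + r, q)` into `√((q + r) / (2π q r)) · (q + r)^(q + r) / (q^q r^r)`. The
weights `b = (5 - √5)/10` and `c = √5/5` satisfy `b = (b + c)/φ²` and `c = (b + c)/φ`, hence
`b^q c^r / (b + c)^(q + r) = φ^(-t)`; and when `q - bt`, `r - ct` stay bounded, the weight
`(q + r)^(q + r) b^q c^r / (q^q r^r (b + c)^(q + r))` tends to `1`, because each
`x log (x / y) - (x - y)` is `O((x - y)² / y)`. What is left, `√(t (q + r) / (2π q r))`, tends to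
`√((b + c) / (2π b c)) = φ √(√5 / (2π))`. The ceiling in the statement is within `2` of `bt`,
and the floor is `t` minus it.
-/

open Real Filter Topology

lemma abs_mul_log_div_sub_sub_le {x y : ℝ} (hx : 0 < x) (hy : 0 < y) :
    |x * log (x / y) - (x - y)| ≤ (x - y) ^ 2 / y := by
  have hxy : 0 < x / y := div_pos hx hy
  have lower : x - y ≤ x * log (x / y) := by
    have := one_sub_inv_le_log_of_pos hxy
    rw [inv_div] at this
    have h : x * (1 - y / x) = x - y := by field_simp
    nlinarith
  have upper : x * log (x / y) ≤ x - y + (x - y) ^ 2 / y := by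
    have := log_le_sub_one_of_pos hxy
    have h : x * (x / y - 1) = x - y + (x - y) ^ 2 / y := by field_simp; ring
    nlinarith
  rw [abs_of_nonneg (by linarith)]
  linarith

section Asymptotics

variable {ι : Type*} {l : Filter ι}

lemma tendsto_atTop_of_abs_sub_le {x y : ι → ℝ} {C : ℝ} (hy : Tendsto y l atTop)
    (hxy : ∀ᶠ i in l, |x i - y i| ≤ C) : Tendsto x l atTop := by
  refine tendsto_atTop_mono' l ?_ (tendsto_atTop_add_const_right l (-C) hy)
  filter_upwards [hxy] with i hi
  linarith [(abs_le.mp hi).1]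

lemma tendsto_div_of_abs_sub_mul_le {x T : ι → ℝ} {c C : ℝ} (hT : Tendsto T l atTop)
    (hx : ∀ᶠ i in l, |x i - c * T i| ≤ C) : Tendsto (fun i => x i / T i) l (𝓝 c) := by
  rw [← tendsto_sub_nhds_zero_iff]
  refine squeeze_zero_norm' ?_ (hT.const_div_atTop C)
  filter_upwards [hx, hT.eventually_gt_atTop 0] with i hi hTi
  rw [norm_eq_abs, show x i / T i - c = (x i - c * T i) / T i by field_simp, abs_div,
    abs_of_pos hTi]
  gcongr

lemma tendsto_div_pow_mul_exp_sub {n : ι → ℕ} {y : ι → ℝ} {C : ℝ} (hy : Tendsto y l atTop)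
    (hny : ∀ᶠ i in l, |(n i : ℝ) - y i| ≤ C) :
    Tendsto (fun i => ((n i : ℝ) / y i) ^ n i * exp (y i - n i)) l (𝓝 1) := by
  have hn := tendsto_atTop_of_abs_sub_le hy hny
  have hexponent : Tendsto (fun i => n i * log (n i / y i) - (n i - y i)) l (𝓝 0) := by
    refine squeeze_zero_norm' ?_ (hy.const_div_atTop (C ^ 2))
    filter_upwards [hny, hn.eventually_gt_atTop 0, hy.eventually_gt_atTop 0] with i hi hni hyi
    refine (abs_mul_log_div_sub_sub_le hni hyi).trans (div_le_div_of_nonneg_right ?_ hyi.le)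
    rw [← sq_abs]
    exact pow_le_pow_left₀ (abs_nonneg _) hi 2
  have hexp : Tendsto (fun i => exp (n i * log (n i / y i) - (n i - y i))) l (𝓝 1) := by
    simpa using hexponent.rexp
  refine hexp.congr' ?_
  filter_upwards [hn.eventually_gt_atTop 0, hy.eventually_gt_atTop 0] with i hni hyi
  rw [sub_eq_add_neg, exp_add, ← log_pow, exp_log (by positivity), neg_sub]

lemma add_pow_div_pow_mul_pow_mul_eq (q r : ℕ) {b c T : ℝ} (hb : 0 < b) (hc : 0 < c)
    (hT : 0 < T) :
    ((q : ℝ) + r) ^ (q + r) / ((q : ℝ) ^ q * (r : ℝ) ^ r) * (b ^ q * c ^ r / (b + c) ^ (q + r)) =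
      ((q + r) / ((b + c) * T)) ^ (q + r) * exp ((b + c) * T - (q + r)) /
        ((q / (b * T)) ^ q * exp (b * T - q) * ((r / (c * T)) ^ r * exp (c * T - r))) := by
  have hexp : exp ((b + c) * T - (q + r)) = exp (b * T - q) * exp (c * T - r) := by
    rw [← exp_add]; ring_nf
  have hqq : (q : ℝ) ^ q ≠ 0 := by exact_mod_cast Nat.pow_self_pos.ne'
  have hrr : (r : ℝ) ^ r ≠ 0 := by exact_mod_cast Nat.pow_self_pos.ne'
  rw [hexp, div_pow, div_pow, div_pow, mul_pow, mul_pow, mul_pow, pow_add T]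
  field_simp

lemma tendsto_add_pow_div_pow_mul_pow_mul {q r : ι → ℕ} {T : ι → ℝ} {b c Cq Cr : ℝ}
    (hb : 0 < b) (hc : 0 < c) (hT : Tendsto T l atTop)
    (hq : ∀ᶠ i in l, |(q i : ℝ) - b * T i| ≤ Cq) (hr : ∀ᶠ i in l, |(r i : ℝ) - c * T i| ≤ Cr) :
    Tendsto (fun i => ((q i : ℝ) + r i) ^ (q i + r i) / ((q i : ℝ) ^ q i * (r i : ℝ) ^ r i) *
      (b ^ q i * c ^ r i / (b + c) ^ (q i + r i))) l (𝓝 1) := by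
  have hqr : ∀ᶠ i in l, |((q i + r i : ℕ) : ℝ) - (b + c) * T i| ≤ Cq + Cr := by
    filter_upwards [hq, hr] with i hqi hri
    push_cast
    rw [show (q i : ℝ) + r i - (b + c) * T i = (q i - b * T i) + (r i - c * T i) by ring]
    exact (abs_add_le _ _).trans (add_le_add hqi hri)
  have hlim := (tendsto_div_pow_mul_exp_sub (hT.const_mul_atTop (add_pos hb hc)) hqr).div
    ((tendsto_div_pow_mul_exp_sub (hT.const_mul_atTop hb) hq).mul
      (tendsto_div_pow_mul_exp_sub (hT.const_mul_atTop hc) hr)) (by norm_num)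
  rw [mul_one, div_one] at hlim
  refine hlim.congr' ?_
  filter_upwards [hT.eventually_gt_atTop 0] with i hTi
  push_cast
  exact (add_pow_div_pow_mul_pow_mul_eq (q i) (r i) hb hc hTi).symm

end Asymptotics

section Stirling

open Nat Stirling

lemma choose_add_mul_sqrt_mul_pow_div_pow (q r : ℕ) (hq : q ≠ 0) (hr : r ≠ 0) :
    ((q + r).choose q : ℝ) * √(2 * π * q * r / (q + r)) *
        ((q : ℝ) ^ q * (r : ℝ) ^ r / ((q : ℝ) + r) ^ (q + r)) =
      √π * (stirlingSeq (q + r) / (stirlingSeq q * stirlingSeq r)) := by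
  have hsqrt : √(2 * π * q * r / (q + r)) = √π * (√(2 * q) * √(2 * r) / √(2 * (q + r))) := by
    rw [← sqrt_mul (by positivity), ← sqrt_div (by positivity), ← sqrt_mul pi_pos.le]
    congr 1
    field_simp
  simp only [stirlingSeq, cast_add_choose, cast_add, hsqrt, div_pow, pow_add]
  field_simp

lemma tendsto_choose_add_mul_sqrt_mul_pow_div_pow {ι : Type*} {l : Filter ι} {q r : ι → ℕ}
    (hq : Tendsto q l atTop) (hr : Tendsto r l atTop) :
    Tendsto (fun i => ((q i + r i).choose (q i) : ℝ) * √(2 * π * q i * r i / (q i + r i)) *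
      ((q i : ℝ) ^ q i * (r i : ℝ) ^ r i / ((q i : ℝ) + r i) ^ (q i + r i))) l (𝓝 1) := by
  have hsqrtπ : √π ≠ 0 := (sqrt_pos.mpr pi_pos).ne'
  have hlim := (tendsto_stirlingSeq_sqrt_pi.comp (hq.atTop_add_atTop hr)).div
    ((tendsto_stirlingSeq_sqrt_pi.comp hq).mul (tendsto_stirlingSeq_sqrt_pi.comp hr))
    (mul_ne_zero hsqrtπ hsqrtπ)
  rw [div_mul_cancel_right₀ hsqrtπ] at hlim
  have hlim' := hlim.const_mul √π
  rw [mul_inv_cancel₀ hsqrtπ] at hlim'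
  refine hlim'.congr' ?_
  filter_upwards [hq.eventually_ne_atTop 0, hr.eventually_ne_atTop 0] with i hqi hri
  exact (choose_add_mul_sqrt_mul_pow_div_pow _ _ hqi hri).symm

end Stirling

section GoldenRatio

open scoped goldenRatio

lemma sq_sqrt_five : √5 ^ 2 = 5 := sq_sqrt (by norm_num)

lemma pow_mul_pow_div_add_pow_eq_inv_goldenRatio_pow (q r : ℕ) :
    ((5 - √5) / 10) ^ q * (√5 / 5) ^ r / ((5 - √5) / 10 + √5 / 5) ^ (q + r) =
      (φ ^ (2 * q + r))⁻¹ := by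
  have hb : (5 - √5) / 10 = ((5 - √5) / 10 + √5 / 5) / φ ^ 2 := by
    rw [eq_div_iff (by positivity), goldenRatio]
    linear_combination ((3 - √5) / 40) * sq_sqrt_five
  have hc : √5 / 5 = ((5 - √5) / 10 + √5 / 5) / φ := by
    rw [eq_div_iff (by positivity), goldenRatio]
    linear_combination (1 / 10 : ℝ) * sq_sqrt_five
  have hs : (5 - √5) / 10 + √5 / 5 ≠ 0 := by linarith [sqrt_nonneg 5]
  have hφ : φ ≠ 0 := goldenRatio_ne_zero
  generalize (5 - √5) / 10 + √5 / 5 = s at hs hb hc ⊢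
  generalize φ = g at hφ hb hc ⊢
  rw [hb, hc, div_pow, div_pow, ← pow_mul, pow_add, pow_add, pow_mul]
  field_simp

lemma sqrt_add_div_two_pi_mul_mul_eq :
    √(((5 - √5) / 10 + √5 / 5) / (2 * π * ((5 - √5) / 10) * (√5 / 5))) =
      φ * √(√5 / (2 * π)) := by
  have h5 : 5 - √5 ≠ 0 := by nlinarith [sq_sqrt_five, sqrt_nonneg 5]
  rw [← sqrt_sq goldenRatio_pos.le, ← sqrt_mul (sq_nonneg φ)]
  congr 1
  rw [goldenRatio]
  field_simp
  linear_combination (√5 ^ 3 - 3 * √5 ^ 2 - 4 * √5 - 20) * sq_sqrt_five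

lemma choose_add_mul_sqrt_div_goldenRatio_pow_eq (q r : ℕ) (hq : q ≠ 0) (hr : r ≠ 0) :
    ((q + r).choose q : ℝ) * √((2 * q + r : ℕ) : ℝ) / φ ^ (2 * q + r) =
      ((q + r).choose q : ℝ) * √(2 * π * q * r / (q + r)) *
          ((q : ℝ) ^ q * (r : ℝ) ^ r / ((q : ℝ) + r) ^ (q + r)) *
        (((q : ℝ) + r) ^ (q + r) / ((q : ℝ) ^ q * (r : ℝ) ^ r) *
          (((5 - √5) / 10) ^ q * (√5 / 5) ^ r / ((5 - √5) / 10 + √5 / 5) ^ (q + r))) *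
        √((q / ((2 * q + r : ℕ) : ℝ) + r / ((2 * q + r : ℕ) : ℝ)) /
          (2 * π * (q / ((2 * q + r : ℕ) : ℝ)) * (r / ((2 * q + r : ℕ) : ℝ)))) := by
  have hsqrt : √(2 * π * q * r / (q + r)) *
      √((q / ((2 * q + r : ℕ) : ℝ) + r / ((2 * q + r : ℕ) : ℝ)) /
        (2 * π * (q / ((2 * q + r : ℕ) : ℝ)) * (r / ((2 * q + r : ℕ) : ℝ)))) =
      √((2 * q + r : ℕ) : ℝ) := by
    rw [← sqrt_mul (by positivity)]
    congr 1
    push_cast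
    field_simp
  rw [pow_mul_pow_div_add_pow_eq_inv_goldenRatio_pow, ← hsqrt]
  field_simp

theorem tendsto_choose_sub_mul_sqrt_div_goldenRatio_pow {l : ℕ → ℕ} {C : ℝ}
    (hl : ∀ᶠ t in atTop, |(l t : ℝ) - (5 - √5) / 10 * t| ≤ C) :
    Tendsto (fun t => ((t - l t).choose (l t) : ℝ) * √t / φ ^ t) atTop
      (𝓝 (φ * √(√5 / (2 * π)))) := by
  have hb : 0 < (5 - √5) / 10 := by nlinarith [sq_sqrt_five, sqrt_nonneg 5]
  have hc : 0 < √5 / 5 := by positivity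
  have hT : Tendsto (fun t : ℕ => (t : ℝ)) atTop atTop := tendsto_natCast_atTop_atTop
  have hrest : ∀ᶠ t : ℕ in atTop, |((t : ℝ) - 2 * l t) - √5 / 5 * t| ≤ 2 * C := by
    filter_upwards [hl] with t ht
    rw [show (t : ℝ) - 2 * l t - √5 / 5 * t = -2 * (l t - (5 - √5) / 10 * t) by ring, abs_mul,
      abs_neg, abs_two]
    linarith
  have h2l : ∀ᶠ t in atTop, 2 * l t ≤ t := by
    have hrest_top := tendsto_atTop_of_abs_sub_le (hT.const_mul_atTop hc) hrest
    filter_upwards [hrest_top.eventually_ge_atTop 0] with t ht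
    exact_mod_cast sub_nonneg.mp ht
  have hr : ∀ᶠ t in atTop, |((t - 2 * l t : ℕ) : ℝ) - √5 / 5 * t| ≤ 2 * C := by
    filter_upwards [hrest, h2l] with t ht h2
    rwa [Nat.cast_sub h2, Nat.cast_mul, Nat.cast_ofNat]
  have hl_top : Tendsto l atTop atTop := tendsto_natCast_atTop_iff.mp
    (tendsto_atTop_of_abs_sub_le (hT.const_mul_atTop hb) hl)
  have hr_top : Tendsto (fun t => t - 2 * l t) atTop atTop := tendsto_natCast_atTop_iff.mp
    (tendsto_atTop_of_abs_sub_le (hT.const_mul_atTop hc) hr)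
  have hA := tendsto_choose_add_mul_sqrt_mul_pow_div_pow hl_top hr_top
  have hB := tendsto_add_pow_div_pow_mul_pow_mul hb hc hT hl hr
  have hlt := tendsto_div_of_abs_sub_mul_le hT hl
  have hrt := tendsto_div_of_abs_sub_mul_le hT hr
  have hD := ((hlt.add hrt).div ((hlt.const_mul (2 * π)).mul hrt) (by positivity)).sqrt
  have hlim := (hA.mul hB).mul hD
  rw [one_mul, one_mul, sqrt_add_div_two_pi_mul_mul_eq] at hlim
  refine hlim.congr' ?_
  filter_upwards [h2l, hl_top.eventually_ne_atTop 0, hr_top.eventually_ne_atTop 0]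
    with t h2 hq hr
  have key := choose_add_mul_sqrt_div_goldenRatio_pow_eq _ _ hq hr
  rw [show 2 * l t + (t - 2 * l t) = t by omega] at key
  rw [show t - l t = l t + (t - 2 * l t) by omega]
  exact key.symm

end GoldenRatio

lemma Nat.floor_eq_sub_ceil_sub {R : Type*} [Ring R] [LinearOrder R] [IsStrictOrderedRing R]
    [FloorRing R] {x : R} {n : ℕ} (hx : x ≤ n) : ⌊x⌋₊ = n - ⌈n - x⌉₊ := by
  have hceil : (⌈n - x⌉₊ : ℤ) = n - ⌊x⌋ := by
    rw [Int.natCast_ceil_eq_ceil (sub_nonneg.mpr hx), ← neg_add_eq_sub, Int.ceil_add_natCast,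
      Int.ceil_neg]
    ring
  have hfloor := Int.floor_toNat x
  omega

lemma abs_sqrt_five_mul_sq_add_four_sub_le {u : ℝ} (hu : 1 ≤ u) :
    |√(5 * u ^ 2 + 4) - √5 * u| ≤ 1 := by
  have h5 : 2 < √5 := by nlinarith [sq_sqrt_five, sqrt_nonneg 5]
  have lower : √5 * u ≤ √(5 * u ^ 2 + 4) :=
    le_sqrt_of_sq_le (by nlinarith [sq_sqrt_five])
  have upper : √(5 * u ^ 2 + 4) ≤ √5 * u + 1 :=
    sqrt_le_iff.mpr ⟨by positivity, by nlinarith [sq_sqrt_five]⟩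
  rw [abs_le]
  constructor <;> linarith

theorem stmt17 :
    let φ : ℝ := (1 + Real.sqrt 5) / 2
    Filter.Tendsto
      (fun t : ℕ =>
        ((Nat.choose ⌊(5 * (t : ℝ) + 3 + Real.sqrt (5 * ((t : ℝ) + 1) ^ 2 + 4)) / 10⌋₊
            ⌈(5 * (t : ℝ) - 3 - Real.sqrt (5 * ((t : ℝ) + 1) ^ 2 + 4)) / 10⌉₊ : ℝ) *
          Real.sqrt t) / φ ^ t)
      Filter.atTop (nhds (φ * Real.sqrt (Real.sqrt 5 / (2 * Real.pi)))) := by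
  intro φ
  have hs : ∀ t : ℕ, |√(5 * ((t : ℝ) + 1) ^ 2 + 4) - √5 * (t + 1)| ≤ 1 := fun t =>
    abs_sqrt_five_mul_sq_add_four_sub_le (by simp)
  have hlow : ∀ᶠ t : ℕ in atTop, 0 ≤ (5 * (t : ℝ) - 3 - √(5 * ((t : ℝ) + 1) ^ 2 + 4)) / 10 := by
    filter_upwards [eventually_ge_atTop 4] with t ht
    have hs_hi := (abs_le.mp (hs t)).2
    have ht' : (4 : ℝ) ≤ t := by exact_mod_cast ht
    nlinarith [sq_sqrt_five, sqrt_nonneg 5]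
  have hl : ∀ᶠ t : ℕ in atTop, |(⌈(5 * (t : ℝ) - 3 - √(5 * ((t : ℝ) + 1) ^ 2 + 4)) / 10⌉₊ : ℝ) -
      (5 - √5) / 10 * t| ≤ 2 := by
    filter_upwards [hlow] with t ht
    obtain ⟨hceil_lo, hceil_hi⟩ := abs_le.mp (Nat.abs_ceil_sub_le ht)
    obtain ⟨hs_lo, hs_hi⟩ := abs_le.mp (hs t)
    have h5 : √5 < 3 := by nlinarith [sq_sqrt_five, sqrt_nonneg 5]
    rw [abs_le]
    constructor <;> linarith [sqrt_nonneg 5]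
  refine (tendsto_choose_sub_mul_sqrt_div_goldenRatio_pow hl).congr' ?_
  filter_upwards [hlow] with t ht
  rw [Nat.floor_eq_sub_ceil_sub (n := t) (by linarith)]
  congr 6
  ring
end

section
/- If a family of nonnegative reals N[i,j] satisfies N[i,j] ≤ N[i−1,j] + N[i,j−1] + c₀ and also in some cells N[i,j] ≤ N[i−2,j] + N[i−2,j−1] + N[i−1,j−1] + N[i−1,j−2] + N[i,j−2] + c₀, with N[i,j] ≤ c·C(i+j,i) − d for all i ≤ 1 or j ≤ 1 (with c, d suitably chosen relative to c₀), then N[m,n] ≤ c·C(m+n, m) − d for all m, n ≥ 0. The key identity is that C(m+n−2, m−2) + C(m+n−3, m−2) + C(m+n−2, m−1) + C(m+n−3, m−1) + C(m+n−2, m) ≤ C(m+n, m) via repeated application of Pascal's rule. -/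
lemma pascal5 (a b : ℕ) :
    Nat.choose (a + b + 2) a + Nat.choose (a + b + 1) a +
      Nat.choose (a + b + 2) (a + 1) + Nat.choose (a + b + 1) (a + 1) +
      Nat.choose (a + b + 2) (a + 2) = Nat.choose (a + b + 4) (a + 2) := by
  have h1 : Nat.choose (a + b + 4) (a + 2) =
      Nat.choose (a + b + 3) (a + 1) + Nat.choose (a + b + 3) (a + 2) := by
    have := Nat.choose_succ_succ (a + b + 3) (a + 1)
    exact this
  have h2 : Nat.choose (a + b + 3) (a + 1) =
      Nat.choose (a + b + 2) a + Nat.choose (a + b + 2) (a + 1) := by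
    have := Nat.choose_succ_succ (a + b + 2) a
    exact this
  have h3 : Nat.choose (a + b + 3) (a + 2) =
      Nat.choose (a + b + 2) (a + 1) + Nat.choose (a + b + 2) (a + 2) := by
    have := Nat.choose_succ_succ (a + b + 2) (a + 1)
    exact this
  have h4 : Nat.choose (a + b + 2) (a + 1) =
      Nat.choose (a + b + 1) a + Nat.choose (a + b + 1) (a + 1) := by
    have := Nat.choose_succ_succ (a + b + 1) a
    exact this
  omega

theorem stmt19 (N : ℕ → ℕ → ℝ) (c₀ c d : ℝ)
    (hNnn : ∀ i j, 0 ≤ N i j) (hc₀ : 0 ≤ c₀) (hd : 0 ≤ d) (hcd : c₀ ≤ d)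
    (hbase : ∀ i j, i ≤ 1 ∨ j ≤ 1 → N i j ≤ c * Nat.choose (i + j) i - d)
    (hrec : ∀ i j, 2 ≤ i → 2 ≤ j →
      N i j ≤ N (i - 1) j + N i (j - 1) + c₀ ∨
        N i j ≤ N (i - 2) j + N (i - 2) (j - 1) + N (i - 1) (j - 1) +
          N (i - 1) (j - 2) + N i (j - 2) + c₀) :
    (∀ m n : ℕ, N m n ≤ c * Nat.choose (m + n) m - d) ∧
      ∀ m n : ℕ, 2 ≤ m → 2 ≤ n →
        Nat.choose (m + n - 2) (m - 2) + Nat.choose (m + n - 3) (m - 2) +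
            Nat.choose (m + n - 2) (m - 1) + Nat.choose (m + n - 3) (m - 1) +
            Nat.choose (m + n - 2) m ≤
          Nat.choose (m + n) m := by
  constructor
  · have key : ∀ k m n : ℕ, m + n = k → N m n ≤ c * Nat.choose (m + n) m - d := by
      intro k
      induction k using Nat.strong_induction_on with
      | _ k ih =>
        intro m n hk
        by_cases h1 : m ≤ 1 ∨ n ≤ 1
        · exact hbase m n h1
        · push_neg at h1
          obtain ⟨hm, hn⟩ := h1
          obtain ⟨a, rfl⟩ : ∃ a, m = a + 2 := ⟨m - 2, by omega⟩
          obtain ⟨b, rfl⟩ : ∃ b, n = b + 2 := ⟨n - 2, by omega⟩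
          rcases hrec (a + 2) (b + 2) (by omega) (by omega) with h | h
          · have A := ih (a + b + 3) (by omega) (a + 1) (b + 2) (by omega)
            have B := ih (a + b + 3) (by omega) (a + 2) (b + 1) (by omega)
            have hP : Nat.choose (a + b + 4) (a + 2) =
                Nat.choose (a + b + 3) (a + 1) + Nat.choose (a + b + 3) (a + 2) := by
              have := Nat.choose_succ_succ (a + b + 3) (a + 1)
              exact this
            have e1 : (a + 1) + (b + 2) = a + b + 3 := by omega
            have e2 : (a + 2) + (b + 1) = a + b + 3 := by omega
            have e3 : (a + 2) + (b + 2) = a + b + 4 := by omega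
            rw [e1] at A; rw [e2] at B
            have hsub1 : (a + 2 : ℕ) - 1 = a + 1 := by omega
            have hsub2 : (b + 2 : ℕ) - 1 = b + 1 := by omega
            rw [hsub1, hsub2] at h
            rw [e3, hP]
            push_cast
            linarith
          · have A := ih (a + b + 2) (by omega) a (b + 2) (by omega)
            have B := ih (a + b + 1) (by omega) a (b + 1) (by omega)
            have C := ih (a + b + 2) (by omega) (a + 1) (b + 1) (by omega)
            have D := ih (a + b + 1) (by omega) (a + 1) b (by omega)
            have E := ih (a + b + 2) (by omega) (a + 2) b (by omega)
            have e1 : a + (b + 2) = a + b + 2 := by omega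
            have e2 : a + (b + 1) = a + b + 1 := by omega
            have e3 : (a + 1) + (b + 1) = a + b + 2 := by omega
            have e4 : (a + 1) + b = a + b + 1 := by omega
            have e5 : (a + 2) + b = a + b + 2 := by omega
            have e6 : (a + 2) + (b + 2) = a + b + 4 := by omega
            rw [e1] at A; rw [e2] at B; rw [e3] at C; rw [e4] at D; rw [e5] at E
            have hs1 : (a + 2 : ℕ) - 2 = a := by omega
            have hs2 : (a + 2 : ℕ) - 1 = a + 1 := by omega
            have hs3 : (b + 2 : ℕ) - 2 = b := by omega
            have hs4 : (b + 2 : ℕ) - 1 = b + 1 := by omega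
            rw [hs1, hs2, hs3, hs4] at h
            have hP := pascal5 a b
            rw [e6, ← hP]
            push_cast
            linarith
    intro m n
    exact key (m + n) m n rfl
  · intro m n hm hn
    obtain ⟨a, rfl⟩ : ∃ a, m = a + 2 := ⟨m - 2, by omega⟩
    obtain ⟨b, rfl⟩ : ∃ b, n = b + 2 := ⟨n - 2, by omega⟩
    have hP := pascal5 a b
    have e1 : (a + 2) + (b + 2) - 2 = a + b + 2 := by omega
    have e2 : (a + 2) + (b + 2) - 3 = a + b + 1 := by omega
    have e3 : (a + 2) - 2 = a := by omega
    have e4 : (a + 2) - 1 = a + 1 := by omega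
    have e5 : (a + 2) + (b + 2) = a + b + 4 := by omega
    rw [e1, e2, e3, e4, e5]
    omega
end
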